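/- arXiv:1112.0127 — 6 statements merged into one kernel-verified Lean document; each statement's English description precedes it below -/
import Mathlib

section
/- For every two integers n and k with 2 ≤ k ≤ n, the generalized k-edge-connectivity of the complete graph K_n equals n − ⌈k/2⌉. -/
open SimpleGraph

variable {V : Type*}

/-- An `S`-Steiner tree in `G`: a subgraph of `G` that is a tree and contains all of `S`. -/
def IsSteinerTree (G : SimpleGraph V) (S : Set V) (T : G.Subgraph) : Prop :=
  S ⊆ T.verts ∧ T.coe.IsTree

/-- The maximum number of pairwise edge-disjoint `S`-Steiner trees in `G`. -/
noncomputable def steinerEdgeConn (G : SimpleGraph V) (S : Set V) : ℕ :=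
  sSup {n : ℕ | ∃ f : Fin n → G.Subgraph, (∀ i, IsSteinerTree G S (f i)) ∧
    ∀ i j, i ≠ j → Disjoint (f i).edgeSet (f j).edgeSet}

/-- The maximum number of pairwise internally disjoint `S`-Steiner trees in `G`. -/
noncomputable def steinerConn (G : SimpleGraph V) (S : Set V) : ℕ :=
  sSup {n : ℕ | ∃ f : Fin n → G.Subgraph, (∀ i, IsSteinerTree G S (f i)) ∧
    ∀ i j, i ≠ j → Disjoint (f i).edgeSet (f j).edgeSet ∧
      (f i).verts ∩ (f j).verts = S}

/-- The generalized `k`-edge-connectivity `λ_k(G)`. -/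
noncomputable def genEdgeConn (G : SimpleGraph V) (k : ℕ) : ℕ :=
  sInf {m : ℕ | ∃ S : Set V, S.ncard = k ∧ steinerEdgeConn G S = m}

/-- The generalized `k`-connectivity `κ_k(G)`. -/
noncomputable def genConn (G : SimpleGraph V) (k : ℕ) : ℕ :=
  sInf {m : ℕ | ∃ S : Set V, S.ncard = k ∧ steinerConn G S = m}

/-- The edge-connectivity `λ(G)`: the least size of a set of edges whose removal
disconnects the graph. -/
noncomputable def edgeConn (G : SimpleGraph V) : ℕ :=
  sInf {m : ℕ | ∃ M : Set (Sym2 V), M ⊆ G.edgeSet ∧ M.ncard = m ∧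
    ¬ (G.deleteEdges M).Connected}

/-- The vertex-connectivity `κ(G)`: the least size of a set of vertices whose removal
leaves a non-connected graph. -/
noncomputable def vertConn (G : SimpleGraph V) : ℕ :=
  sInf {m : ℕ | ∃ A : Set V, A.ncard = m ∧ ¬ (G.induce (Aᶜ : Set V)).Connected}


/-- The minimum degree `δ(G)` (as the least cardinality of a neighbor set). -/
noncomputable def minDeg (G : SimpleGraph V) : ℕ :=
  sInf {d : ℕ | ∃ v : V, (G.neighborSet v).ncard = d}


/-!
Upper bound. Root an `S`-Steiner tree at a vertex `r` and send every other vertex of `S` to the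
first edge of a shortest path to `r`: this is injective, so the tree has at least `|S|` edges
meeting `S`, or at least `|S| - 1` if all its vertices lie in `S`. Trees of the second kind use
only the `C(k, 2)` edges inside `S`, so there are at most `k / 2` of them, and comparing with the
`C(k, 2) + k (n - k)` edges of `K_n` meeting `S` gives `2 t + k ≤ 2 n`.

Lower bound. Take a star from each of the `n - k` vertices outside `S` to `S`, and `⌊k / 2⌋`
double stars spanning `S = {s₀, …, s_{k-1}}` centred at the pairs `{s_{2j}, s_{2j+1}}`.
-/

open Function

variable {ι α β : Type*}

lemma Function.Injective.injOn_sym2_mk_of_lt [Preorder β] {σ : α → V} (hσ : Injective σ)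
    (p : α → α) (rank : α → β) :
    Set.InjOn (fun a => s(σ a, σ (p a))) {a | rank (p a) < rank a} := by
  intro a ha b hb hab
  rcases Sym2.eq_iff.1 hab with ⟨hab, -⟩ | ⟨hab, hba⟩
  · exact hσ hab
  · rw [Set.mem_ofPred_eq, hσ hba] at ha
    rw [Set.mem_ofPred_eq, ← hσ hab] at hb
    exact absurd (ha.trans hb) (lt_irrefl _)

lemma Set.sum_ncard_le_ncard_of_pairwiseDisjoint {s : Finset ι} {A : ι → Set α} {B : Set α}
    (hB : B.Finite) (hAB : ∀ i ∈ s, A i ⊆ B) (hA : (s : Set ι).PairwiseDisjoint A) :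
    ∑ i ∈ s, (A i).ncard ≤ B.ncard := by
  rw [← finsum_mem_coe_finset,
    ← s.finite_toSet.ncard_biUnion (fun i hi => hB.subset (hAB i hi)) hA]
  exact Set.ncard_le_ncard (Set.iUnion₂_subset hAB) hB

lemma Nat.choose_two_add (a b : ℕ) : (a + b).choose 2 = a.choose 2 + a * b + b.choose 2 := by
  induction b with
  | zero => simp
  | succ b ih =>
    rw [← add_assoc, Nat.choose_succ_succ, ih, Nat.choose_succ_succ, Nat.choose_one_right,
      Nat.choose_one_right]
    ring

lemma two_mul_le_of_mul_le_choose_two {k m t a : ℕ} (hk : 2 ≤ k)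
    (ha : a * (k - 1) ≤ k.choose 2) (ht : t * k ≤ k.choose 2 + k * m + a) :
    2 * t ≤ k + 2 * m := by
  have hchoose : 2 * k.choose 2 = k * (k - 1) := by
    rw [Nat.choose_two_right, Nat.mul_div_cancel' (Nat.even_mul_pred_self k).two_dvd]
  have ha' : 2 * a ≤ k := Nat.le_of_mul_le_mul_right (by linarith) (by omega : 0 < k - 1)
  have hkk : k * (k - 1) + k = k * k := by
    rw [← Nat.mul_succ, Nat.succ_eq_add_one, Nat.sub_add_cancel (by omega)]
  refine Nat.le_of_mul_le_mul_right ?_ (by omega : 0 < k)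
  nlinarith

namespace SimpleGraph

lemma Reachable.exists_adj_dist_lt {G : SimpleGraph V} {v r : V} (h : G.Reachable v r)
    (hv : v ≠ r) : ∃ w, G.Adj v w ∧ G.dist w r < G.dist v r := by
  obtain ⟨p, hp⟩ := h.exists_walk_length_eq_dist
  cases p with
  | nil => exact absurd rfl hv
  | cons hadj q =>
    refine ⟨_, hadj, ?_⟩
    have := dist_le q
    rw [Walk.length_cons] at hp
    omega

lemma Connected.exists_parent {G : SimpleGraph V} (hG : G.Connected) (r : V) :
    ∃ p : V → V, ∀ v ≠ r, G.Adj v (p v) ∧ G.dist (p v) r < G.dist v r := by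
  classical
  choose p hp using fun v (hv : v ≠ r) => (hG v r).exists_adj_dist_lt hv
  exact ⟨fun v => if hv : v = r then r else p v hv, fun v hv => by simpa [hv] using hp v hv⟩

lemma ncard_edgeSet_top_inter_sym2 [Finite V] (A : Set V) :
    ((⊤ : SimpleGraph V).edgeSet ∩ A.sym2).ncard = A.ncard.choose 2 := by
  classical
  have : Fintype A := Fintype.ofFinite A
  have himage : (⊤ : SimpleGraph V).edgeSet ∩ A.sym2 =
      Sym2.map (↑) '' (⊤ : SimpleGraph A).edgeSet := by
    ext e
    induction e using Sym2.ind with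
    | h x y =>
      simp only [Set.mem_inter_iff, mem_edgeSet, top_adj, Set.mk_mem_sym2_iff, Set.mem_image,
        Sym2.exists, Sym2.map_mk, Sym2.eq_iff, Subtype.exists]
      aesop
  rw [himage, Set.ncard_image_of_injective _ (Sym2.map.injective Subtype.coe_injective),
    Set.ncard_eq_toFinset_card', ← edgeFinset, card_edgeFinset_top_eq_card_choose_two,
    ← Nat.card_eq_fintype_card, Nat.card_coe_set_eq]

lemma ncard_edgeSet_top_diff_sym2_compl [Finite V] (A : Set V) :
    ((⊤ : SimpleGraph V).edgeSet \ Aᶜ.sym2).ncard =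
      A.ncard.choose 2 + A.ncard * Aᶜ.ncard := by
  have hall := ncard_edgeSet_top_inter_sym2 (Set.univ : Set V)
  rw [Set.sym2_univ, Set.inter_univ, Set.ncard_univ, ← Set.ncard_add_ncard_compl A,
    Nat.choose_two_add] at hall
  rw [← Set.sdiff_inter_self_eq_sdiff, Set.inter_comm, Set.ncard_sdiff Set.inter_subset_left,
    ncard_edgeSet_top_inter_sym2, hall]
  omega

namespace Subgraph

variable {G : SimpleGraph V}

lemma ncard_diff_singleton_le_ncard_edgeSet_diff [Finite V] {T : G.Subgraph}
    (hT : T.coe.Connected) {S : Set V} (hS : S ⊆ T.verts) {r : V} (hr : r ∈ T.verts) :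
    (S \ {r}).ncard ≤ (T.edgeSet \ Sᶜ.sym2).ncard := by
  let r' : T.verts := ⟨r, hr⟩
  obtain ⟨p, hp⟩ := hT.exists_parent r'
  let A : Set T.verts := Subtype.val ⁻¹' (S \ {r})
  have hAr : ∀ v ∈ A, v ≠ r' := fun v hv h => hv.2 (congrArg Subtype.val h)
  have hinj := (Subtype.val_injective.injOn_sym2_mk_of_lt p (T.coe.dist · r')).mono
    fun v hv => (hp v (hAr v hv)).2
  calc (S \ {r}).ncard = A.ncard :=
        (Set.ncard_preimage_of_injective_subset_range Subtype.val_injective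
          (Subtype.range_coe.symm ▸ Set.sdiff_subset.trans hS)).symm
    _ = ((fun v : T.verts => s((v : V), (p v : V))) '' A).ncard := hinj.ncard_image.symm
    _ ≤ _ := by
      refine Set.ncard_le_ncard ?_ (Set.toFinite _)
      rintro _ ⟨v, hv, rfl⟩
      exact ⟨(hp v (hAr v hv)).1, fun h => (Set.mk_mem_sym2_iff.1 h).1 hv.1⟩

/-- A rooted tree presented by a parent map `p` with root `r` on an index type embedded by `σ`
(a tree when `p` strictly decreases some rank, see `isTree_coe_ofParent`). -/
def ofParent (G : SimpleGraph V) (σ : ι → V) (r : ι) (p : ι → ι) : G.Subgraph where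
  verts := Set.range σ
  Adj x y := G.Adj x y ∧ ∃ i ≠ r, s(σ i, σ (p i)) = s(x, y)
  adj_sub h := h.1
  edge_vert := by
    rintro x y ⟨-, i, -, h⟩
    rcases Sym2.eq_iff.1 h with ⟨h, -⟩ | ⟨-, h⟩
    exacts [⟨i, h⟩, ⟨p i, h⟩]
  symm := ⟨fun _ _ ⟨h, i, hi, he⟩ => ⟨h.symm, i, hi, he.trans Sym2.eq_swap⟩⟩

variable {σ : ι → V} {r : ι} {p : ι → ι}

lemma edgeSet_ofParent_subset :
    (ofParent G σ r p).edgeSet ⊆ Set.range fun i => s(σ i, σ (p i)) := by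
  intro e he
  induction e using Sym2.ind with
  | h x y =>
    obtain ⟨-, i, -, hi⟩ := Subgraph.mem_edgeSet.1 he
    exact ⟨i, hi⟩

lemma edgeSet_ofParent (hadj : ∀ i ≠ r, G.Adj (σ i) (σ (p i))) :
    (ofParent G σ r p).edgeSet = (fun i => s(σ i, σ (p i))) '' {r}ᶜ := by
  ext e
  induction e using Sym2.ind with
  | h x y =>
    rw [Subgraph.mem_edgeSet]
    refine ⟨fun ⟨_, i, hi, he⟩ => ⟨i, hi, he⟩, ?_⟩
    rintro ⟨i, hi, he⟩
    exact ⟨(adj_congr_of_sym2 (H := ⊤) he).1 (hadj i hi), i, hi, he⟩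

lemma isTree_coe_ofParent [Finite ι] (hσ : Injective σ) (rank : ι → ℕ)
    (hadj : ∀ i ≠ r, G.Adj (σ i) (σ (p i))) (hlt : ∀ i ≠ r, rank (p i) < rank i) :
    (ofParent G σ r p).coe.IsTree := by
  set T := ofParent G σ r p
  have : Finite T.verts := (Set.finite_range σ).to_subtype
  have hreach : ∀ i, T.coe.Reachable ⟨σ i, i, rfl⟩ ⟨σ r, r, rfl⟩ := by
    intro i
    induction i using (measure rank).wf.induction with
    | _ i ih =>
      by_cases hi : i = r
      · rw [hi]
      have hstep : T.coe.Adj ⟨σ i, i, rfl⟩ ⟨σ (p i), p i, rfl⟩ :=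
        ⟨hadj i hi, i, hi, rfl⟩
      exact hstep.reachable.trans (ih (p i) (hlt i hi))
  rw [isTree_iff_connected_and_card]
  refine ⟨(connected_iff_exists_forall_reachable _).2 ⟨⟨σ r, r, rfl⟩, ?_⟩, ?_⟩
  · rintro ⟨_, i, rfl⟩
    exact (hreach i).symm
  · have hedges : T.edgeSet.ncard = ({r}ᶜ : Set ι).ncard := by
      rw [edgeSet_ofParent hadj]
      exact (Set.InjOn.mono (fun i (hi : i ∈ ({r}ᶜ : Set ι)) => hlt i hi)
        (hσ.injOn_sym2_mk_of_lt p rank)).ncard_image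
    have hverts : Nat.card T.verts = Nat.card ι := Nat.card_range_of_injective hσ
    rw [Nat.card_coe_set_eq, ← Set.ncard_image_of_injective _
      (Sym2.map.injective Subtype.coe_injective), T.image_coe_edgeSet_coe, hedges, hverts,
      ← Set.ncard_add_ncard_compl {r}, Set.ncard_singleton, add_comm]

lemma isTree_coe_ofParent_top [Finite ι] (hσ : Injective σ) (rank : ι → ℕ)
    (hlt : ∀ i ≠ r, rank (p i) < rank i) : (ofParent ⊤ σ r p).coe.IsTree :=
  isTree_coe_ofParent hσ rank
    (fun i hi => hσ.ne fun he => (hlt i hi).ne (congrArg rank he).symm) hlt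

end Subgraph

end SimpleGraph

namespace IsSteinerTree

variable [Finite V] {G : SimpleGraph V} {S : Set V} {T : G.Subgraph}

lemma ncard_le_ncard_edgeSet_diff_add_one (hT : IsSteinerTree G S T) :
    S.ncard ≤ (T.edgeSet \ Sᶜ.sym2).ncard + 1 := by
  obtain rfl | ⟨r, hr⟩ := S.eq_empty_or_nonempty
  · simp
  have := SimpleGraph.Subgraph.ncard_diff_singleton_le_ncard_edgeSet_diff hT.2.connected hT.1
    (hT.1 hr)
  rw [Set.ncard_sdiff_singleton_of_mem hr] at this
  omega

lemma ncard_le_ncard_edgeSet_diff (hT : IsSteinerTree G S T) (hTS : ¬T.verts ⊆ S) :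
    S.ncard ≤ (T.edgeSet \ Sᶜ.sym2).ncard := by
  obtain ⟨r, hr, hrS⟩ := Set.not_subset.1 hTS
  simpa [Set.sdiff_singleton_eq_self hrS] using
    SimpleGraph.Subgraph.ncard_diff_singleton_le_ncard_edgeSet_diff hT.2.connected hT.1 hr

end IsSteinerTree

/-- Here `a` is the number of trees all of whose vertices lie in `S`. -/
theorem exists_card_mul_ncard_le [Finite V] [Fintype ι] {G : SimpleGraph V} {S : Set V}
    {f : ι → G.Subgraph} (hf : ∀ i, IsSteinerTree G S (f i))
    (hd : Pairwise (Disjoint on fun i => (f i).edgeSet)) :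
    ∃ a, a * (S.ncard - 1) ≤ (G.edgeSet ∩ S.sym2).ncard ∧
      Fintype.card ι * S.ncard ≤ (G.edgeSet \ Sᶜ.sym2).ncard + a := by
  classical
  let I := Finset.univ.filter fun i => (f i).verts ⊆ S
  refine ⟨I.card, ?_, ?_⟩
  · calc I.card * (S.ncard - 1) ≤ ∑ i ∈ I, (f i).edgeSet.ncard := by
          rw [← smul_eq_mul]
          refine Finset.card_nsmul_le_sum _ _ _ fun i _ => ?_
          have := (hf i).ncard_le_ncard_edgeSet_diff_add_one
          have := Set.ncard_le_ncard (Set.sdiff_subset (t := Sᶜ.sym2)) (f i).edgeSet.toFinite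
          omega
      _ ≤ _ := by
        refine Set.sum_ncard_le_ncard_of_pairwiseDisjoint (Set.toFinite _)
          (fun i hi e he => ?_) fun i _ j _ hij => hd hij
        refine ⟨(f i).edgeSet_subset he, Set.mem_sym2_iff_subset.2 fun v hv => ?_⟩
        exact (Finset.mem_filter.1 hi).2 ((f i).mem_verts_of_mem_edge he hv)
  · calc Fintype.card ι * S.ncard
        ≤ ∑ i, (((f i).edgeSet \ Sᶜ.sym2).ncard + if (f i).verts ⊆ S then 1 else 0) := by
          rw [← smul_eq_mul, ← Finset.card_univ, ← Finset.sum_const]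
          refine Finset.sum_le_sum fun i _ => ?_
          split_ifs with hi
          · exact (hf i).ncard_le_ncard_edgeSet_diff_add_one
          · exact (hf i).ncard_le_ncard_edgeSet_diff hi
      _ = ∑ i, ((f i).edgeSet \ Sᶜ.sym2).ncard + I.card := by
          rw [Finset.sum_add_distrib, Finset.sum_boole, Nat.cast_id]
      _ ≤ _ := by
        gcongr
        exact Set.sum_ncard_le_ncard_of_pairwiseDisjoint (Set.toFinite _)
          (fun i _ => Set.sdiff_subset_sdiff_left (f i).edgeSet_subset)
          fun i _ j _ hij => (hd hij).mono Set.sdiff_subset Set.sdiff_subset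

/-- The parent of `i` in the `j`-th double star, whose centres are `2j` and `2j + 1`.
For `a < b` the double stars `a` and `b` join the pairs `{2a, 2a+1}` and `{2b, 2b+1}` by the
straight matching `2a + ε — 2b + ε` and the crossed one `2a + ε — 2b + 1 - ε` respectively,
which keeps them edge-disjoint. -/
def pairPartner (j i : ℕ) : ℕ :=
  2 * j + if i / 2 = j then 0 else if j < i / 2 then i % 2 else 1 - i % 2

lemma pairPartner_div_two (j i : ℕ) : pairPartner j i / 2 = j := by
  unfold pairPartner
  split_ifs <;> omega

lemma pairPartner_lt {j k : ℕ} (hj : j < k / 2) (i : ℕ) : pairPartner j i < k := by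
  unfold pairPartner
  split_ifs <;> omega

lemma eq_of_pairPartner_eq_of_pairPartner_eq {j j' a b : ℕ} (hab : pairPartner j a = b)
    (hba : pairPartner j' b = a) : j = j' := by
  unfold pairPartner at hab hba
  split_ifs at hab hba <;> omega

namespace SimpleGraph.Subgraph

variable {G : SimpleGraph V}

def starSubgraph (G : SimpleGraph V) (w : V) (S : Set V) : G.Subgraph :=
  ofParent G (fun o : Option S => o.elim w (↑)) none fun _ => none

def doubleStarSubgraph (G : SimpleGraph V) {k : ℕ} (σ : Fin k → V) (j : Fin (k / 2)) :
    G.Subgraph :=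
  ofParent G σ ⟨2 * j, by omega⟩ fun i => ⟨pairPartner j i, pairPartner_lt j.2 i⟩

lemma mem_verts_starSubgraph {w v : V} {S : Set V} (hv : v ∈ (starSubgraph G w S).verts) :
    v = w ∨ v ∈ S := by
  obtain ⟨_ | ⟨v, hvS⟩, rfl⟩ := hv
  exacts [Or.inl rfl, Or.inr hvS]

lemma mem_of_mem_edgeSet_starSubgraph {w : V} {S : Set V} {e : Sym2 V}
    (he : e ∈ (starSubgraph G w S).edgeSet) : w ∈ e := by
  obtain ⟨o, rfl⟩ := edgeSet_ofParent_subset he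
  exact Sym2.mem_mk_right _ _

lemma isSteinerTree_starSubgraph [Finite V] {w : V} {S : Set V} (hw : w ∉ S) :
    IsSteinerTree ⊤ S (starSubgraph ⊤ w S) := by
  have hinj : Injective fun o : Option S => o.elim w (↑) := by
    rintro (_ | ⟨a, ha⟩) (_ | ⟨b, hb⟩) hab
    · rfl
    · exact (hw ((show w = b from hab) ▸ hb)).elim
    · exact (hw ((show a = w from hab) ▸ ha)).elim
    · exact congrArg some (Subtype.ext hab)
  refine ⟨fun v hv => ⟨some ⟨v, hv⟩, rfl⟩,
    isTree_coe_ofParent_top hinj (fun o => o.elim 0 1) ?_⟩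
  rintro (_ | _) h
  · exact absurd rfl h
  · exact zero_lt_one

lemma isSteinerTree_doubleStarSubgraph [Finite V] {k : ℕ} {σ : Fin k → V} (hσ : Injective σ)
    (j : Fin (k / 2)) : IsSteinerTree ⊤ (Set.range σ) (doubleStarSubgraph ⊤ σ j) := by
  refine ⟨subset_rfl, isTree_coe_ofParent_top hσ
    (fun i => if (i : ℕ) = 2 * j then 0 else if (i : ℕ) / 2 = j then 1 else 2) ?_⟩
  intro i hi
  have hi' : (i : ℕ) ≠ 2 * j := fun h => hi (Fin.ext h)
  dsimp only [pairPartner]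
  split_ifs <;> omega

lemma disjoint_edgeSet_doubleStarSubgraph {k : ℕ} {σ : Fin k → V} (hσ : Injective σ)
    {j j' : Fin (k / 2)} (hj : j ≠ j') :
    Disjoint (doubleStarSubgraph G σ j).edgeSet (doubleStarSubgraph G σ j').edgeSet := by
  refine Set.disjoint_left.2 fun e he he' => hj ?_
  obtain ⟨a, rfl⟩ := edgeSet_ofParent_subset he
  obtain ⟨b, hba⟩ := edgeSet_ofParent_subset he'
  rcases Sym2.eq_iff.1 hba with ⟨-, h⟩ | ⟨h₁, h₂⟩
  · have := congrArg (· / 2) (congrArg Fin.val (hσ h))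
    simp only [pairPartner_div_two] at this
    exact Fin.ext this.symm
  · exact Fin.ext (eq_of_pairPartner_eq_of_pairPartner_eq (congrArg Fin.val (hσ h₁).symm)
      (congrArg Fin.val (hσ h₂)))

end SimpleGraph.Subgraph

open SimpleGraph.Subgraph in
theorem exists_steinerTree_family_top [Finite V] (S : Set V) :
    ∃ f : (Sᶜ : Set V) ⊕ Fin (S.ncard / 2) → (⊤ : SimpleGraph V).Subgraph,
      (∀ i, IsSteinerTree ⊤ S (f i)) ∧ Pairwise (Disjoint on fun i => (f i).edgeSet) := by
  let e : Fin S.ncard ≃ S := (Finite.equivFinOfCardEq (Nat.card_coe_set_eq S)).symm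
  have hσ : Injective fun i => (e i : V) := Subtype.val_injective.comp e.injective
  have hrange : Set.range (fun i => (e i : V)) = S := by
    rw [Set.range_comp' Subtype.val e, e.range_eq_univ, Set.image_univ, Subtype.range_coe]
  have hdisj : ∀ (w : (Sᶜ : Set V)) j, Disjoint (starSubgraph ⊤ (w : V) S).edgeSet
      (doubleStarSubgraph ⊤ (fun i => (e i : V)) j).edgeSet := by
    refine fun w j => Set.disjoint_left.2 fun x hx hx' => w.2 (hrange.subset ?_)
    exact (doubleStarSubgraph ⊤ _ j).mem_verts_of_mem_edge hx'
      (mem_of_mem_edgeSet_starSubgraph hx)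
  refine ⟨Sum.elim (fun w => starSubgraph ⊤ w S) (doubleStarSubgraph ⊤ fun i => (e i : V)),
    ?_, ?_⟩
  · rintro (w | j)
    · exact isSteinerTree_starSubgraph w.2
    · simpa only [Sum.elim_inr, hrange] using isSteinerTree_doubleStarSubgraph hσ j
  · rintro (w | j) (w' | j') hne
    · refine Set.disjoint_left.2 fun x hx hx' => hne (congrArg Sum.inl (Subtype.ext ?_))
      have := (starSubgraph ⊤ _ S).mem_verts_of_mem_edge hx'
        (mem_of_mem_edgeSet_starSubgraph hx)
      exact (mem_verts_starSubgraph this).resolve_right w.2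
    · exact hdisj w j'
    · exact (hdisj w' j).symm
    · exact disjoint_edgeSet_doubleStarSubgraph hσ fun h => hne (congrArg Sum.inr h)

lemma steinerEdgeConn_eq_natCard [Finite ι] {G : SimpleGraph V} {S : Set V}
    {f : ι → G.Subgraph} (hf : ∀ i, IsSteinerTree G S (f i))
    (hd : Pairwise (Disjoint on fun i => (f i).edgeSet))
    (hle : ∀ m (g : Fin m → G.Subgraph), (∀ i, IsSteinerTree G S (g i)) →
      Pairwise (Disjoint on fun i => (g i).edgeSet) → m ≤ Nat.card ι) :
    steinerEdgeConn G S = Nat.card ι := by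
  let e := (Finite.equivFin ι).symm
  exact IsGreatest.csSup_eq
    ⟨⟨fun i => f (e i), fun i => hf _, fun i j hij => hd (e.injective.ne hij)⟩,
      fun m ⟨g, hg, hgd⟩ => hle m g hg fun i j hij => hgd i j hij⟩

theorem steinerEdgeConn_top [Finite V] {S : Set V} (hS : 2 ≤ S.ncard) :
    steinerEdgeConn ⊤ S = Nat.card V - (S.ncard + 1) / 2 := by
  obtain ⟨f, hf, hd⟩ := exists_steinerTree_family_top S
  have hcard := Set.ncard_add_ncard_compl S
  rw [steinerEdgeConn_eq_natCard hf hd, Nat.card_sum, Nat.card_coe_set_eq, Nat.card_fin]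
  · omega
  intro m g hg hgd
  obtain ⟨a, ha, ht⟩ := exists_card_mul_ncard_le hg hgd
  rw [SimpleGraph.ncard_edgeSet_top_inter_sym2] at ha
  rw [SimpleGraph.ncard_edgeSet_top_diff_sym2_compl, Fintype.card_fin] at ht
  have := two_mul_le_of_mul_le_choose_two hS ha ht
  rw [Nat.card_sum, Nat.card_coe_set_eq, Nat.card_fin]
  omega

theorem genEdgeConn_complete (n k : ℕ) (h2 : 2 ≤ k) (hkn : k ≤ n) :
    genEdgeConn (⊤ : SimpleGraph (Fin n)) k = n - (k + 1) / 2 := by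
  obtain ⟨S₀, -, hS₀⟩ := Set.exists_subset_card_eq (n := k) (s := (Set.univ : Set (Fin n)))
    (by rwa [Set.ncard_univ, Nat.card_fin])
  have hval : ∀ S : Set (Fin n), S.ncard = k → steinerEdgeConn ⊤ S = n - (k + 1) / 2 := by
    rintro S rfl
    rw [steinerEdgeConn_top h2, Nat.card_fin]
  have hset : {m | ∃ S : Set (Fin n), S.ncard = k ∧ steinerEdgeConn ⊤ S = m} =
      {n - (k + 1) / 2} :=
    Set.eq_singleton_iff_unique_mem.2
      ⟨⟨S₀, hS₀, hval S₀ hS₀⟩, fun m ⟨S, hS, hm⟩ => hm ▸ hval S hS⟩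
  rw [genEdgeConn, hset, csInf_singleton]
end

section
/- Let G be a graph, S ⊆ V(G) with |S| = k, and T an S-Steiner tree. If all edges of T lie in the induced subgraph G[S], then T uses exactly k−1 edges of E(G[S]) ∪ E_G[S, S̄]. If T contains at least one edge between S and its complement S̄, then T uses at least k edges of E(G[S]) ∪ E_G[S, S̄]. -/
open SimpleGraph

variable {V : Type*}

theorem steinerTree_edge_count {V : Type*} [Fintype V] (G : SimpleGraph V) (S : Set V)
    (k : ℕ) (hk : 2 ≤ k) (hS : S.ncard = k) (T : G.Subgraph) (hT : IsSteinerTree G S T) :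
    ((∀ e ∈ T.edgeSet, ∀ v ∈ e, v ∈ S) →
      {e ∈ T.edgeSet | ∃ v ∈ e, v ∈ S}.ncard = k - 1) ∧
    ((∃ e ∈ T.edgeSet, ∃ u v : V, e = s(u, v) ∧ u ∈ S ∧ v ∉ S) →
      k ≤ {e ∈ T.edgeSet | ∃ v ∈ e, v ∈ S}.ncard) := by
  classical
  obtain ⟨hSsub, htree⟩ := hT
  have hconn : T.coe.Connected := htree.isConnected
  constructor
  · intro hall
    have hAeq : {e ∈ T.edgeSet | ∃ v ∈ e, v ∈ S} = T.edgeSet := by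
      ext e
      simp only [Set.mem_setOf_eq, Set.mem_sep_iff]
      refine ⟨fun h => h.1, fun h => ⟨h, ?_⟩⟩
      induction e with
      | _ a b => exact ⟨a, Sym2.mem_mk_left a b, hall _ h a (Sym2.mem_mk_left a b)⟩
    have hVS : T.verts = S := by
      refine Set.Subset.antisymm (fun x hx => ?_) hSsub
      have h1S : 1 < S.ncard := by rw [hS]; omega
      obtain ⟨y, hyS, hyx⟩ := Set.exists_ne_of_one_lt_ncard h1S x
      have hy : y ∈ T.verts := hSsub hyS
      obtain ⟨p⟩ := hconn ⟨x, hx⟩ ⟨y, hy⟩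
      have hne : (⟨x, hx⟩ : ↥T.verts) ≠ ⟨y, hy⟩ := by
        intro h
        exact hyx (congrArg Subtype.val h).symm
      have hnp : ¬ p.Nil := fun h =>
        hne (SimpleGraph.Walk.eq_of_length_eq_zero
          (SimpleGraph.Walk.nil_iff_length_eq.mp h))
      obtain ⟨u, hadj, q, rfl⟩ := SimpleGraph.Walk.not_nil_iff.mp hnp
      have hadj' : T.Adj x ↑u := hadj
      exact hall _ (SimpleGraph.Subgraph.mem_edgeSet.mpr hadj') x (Sym2.mem_mk_left _ _)
    have h1 : T.coe.edgeFinset.card + 1 = Fintype.card ↥T.verts := htree.card_edgeFinset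
    have h2 : T.edgeSet.ncard = T.coe.edgeSet.ncard := by
      rw [← SimpleGraph.Subgraph.image_coe_edgeSet_coe]
      exact Set.ncard_image_of_injective _ (Sym2.map.injective Subtype.val_injective)
    have h3 : T.coe.edgeSet.ncard = T.coe.edgeFinset.card := by
      rw [← Nat.card_coe_set_eq, Nat.card_eq_fintype_card,
        SimpleGraph.edgeFinset_card]
    have h4 : Fintype.card ↥T.verts = T.verts.ncard := by
      rw [← Nat.card_coe_set_eq, Nat.card_eq_fintype_card]
    have h5 : T.verts.ncard = k := by rw [hVS, hS]
    rw [hAeq]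
    omega
  · rintro ⟨e, he, u, w, rfl, huS, hwS⟩
    have hadj : T.Adj u w := SimpleGraph.Subgraph.mem_edgeSet.mp he
    have hwv : w ∈ T.verts := hadj.snd_mem
    set w' : ↥T.verts := ⟨w, hwv⟩ with hw'
    have hpar : ∀ v : ↥T.verts, v ≠ w' → ∃ p : ↥T.verts,
        T.coe.Adj v p ∧ T.coe.dist p w' + 1 = T.coe.dist v w' := by
      intro v hv
      obtain ⟨q, hq⟩ := hconn.exists_walk_length_eq_dist v w'
      have hnq : ¬ q.Nil := fun h =>
        hv (SimpleGraph.Walk.eq_of_length_eq_zero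
          (SimpleGraph.Walk.nil_iff_length_eq.mp h))
      obtain ⟨p, hadj', q', rfl⟩ := SimpleGraph.Walk.not_nil_iff.mp hnq
      refine ⟨p, hadj', ?_⟩
      have hle : T.coe.dist p w' ≤ q'.length := SimpleGraph.dist_le q'
      obtain ⟨r, hr⟩ := hconn.exists_walk_length_eq_dist p w'
      have hge : T.coe.dist v w' ≤ T.coe.dist p w' + 1 := by
        have h := SimpleGraph.dist_le (SimpleGraph.Walk.cons hadj' r)
        simpa [hr] using h
      simp only [SimpleGraph.Walk.length_cons] at hq
      omega
    choose par hpadj hpdist using hpar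
    have hSvne : ∀ v : ↥S, (⟨↑v, hSsub v.2⟩ : ↥T.verts) ≠ w' := by
      intro v h
      have hvw : (↑v : V) = w := congrArg Subtype.val h
      exact hwS (hvw ▸ v.2)
    let F : ↥S → Sym2 V := fun v => s((v : V), ↑(par ⟨↑v, hSsub v.2⟩ (hSvne v)))
    have hFA : ∀ v, F v ∈ {e ∈ T.edgeSet | ∃ x ∈ e, x ∈ S} := by
      intro v
      have ha : T.Adj ↑v ↑(par ⟨↑v, hSsub v.2⟩ (hSvne v)) := hpadj _ (hSvne v)
      exact ⟨SimpleGraph.Subgraph.mem_edgeSet.mpr ha,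
        ⟨↑v, Sym2.mem_mk_left _ _, v.2⟩⟩
    have hFinj : Function.Injective F := by
      intro a b hab
      rcases Sym2.eq_iff.mp hab with ⟨h1, _⟩ | ⟨h1, h2⟩
      · exact Subtype.ext h1
      · exfalso
        have e1 : (⟨↑a, hSsub a.2⟩ : ↥T.verts) = par ⟨↑b, hSsub b.2⟩ (hSvne b) :=
          Subtype.ext h1
        have e2 : par ⟨↑a, hSsub a.2⟩ (hSvne a) = ⟨↑b, hSsub b.2⟩ :=
          Subtype.ext h2
        have d1 := hpdist ⟨↑a, hSsub a.2⟩ (hSvne a)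
        have d2 := hpdist ⟨↑b, hSsub b.2⟩ (hSvne b)
        rw [e2] at d1
        rw [← e1] at d2
        omega
    let g : ↥S → ↥{e ∈ T.edgeSet | ∃ x ∈ e, x ∈ S} := fun v => ⟨F v, hFA v⟩
    have hg : Function.Injective g := fun a b h => hFinj (congrArg Subtype.val h)
    have hcard := Nat.card_le_card_of_injective g hg
    rwa [Nat.card_coe_set_eq, Nat.card_coe_set_eq, hS] at hcard
end

section
/- For every connected graph G of order n and every integer k with 3 ≤ k ≤ n, the generalized k-connectivity satisfies 1 ≤ κ_k(G) ≤ n − ⌈k/2⌉. -/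
open SimpleGraph

variable {V : Type*}

/-! A spanning tree of `G` is an `S`-Steiner tree for every `S`, so `κ(S) ≥ 1`. For the upper
bound, split a family of internally disjoint `S`-Steiner trees into those with vertex set exactly
`S` and the others. The former are edge-disjoint trees on the `k` vertices of `S`, with `k - 1`
edges each, so there are at most `C(k, 2) / (k - 1) = k / 2` of them. Each of the latter owns a
vertex outside `S`, so there are at most `n - k` of them. Hence
`κ(S) ≤ n - k + ⌊k / 2⌋ = n - ⌈k / 2⌉`. -/

variable {G : SimpleGraph V}

lemma natCard_le_ncard_compl_of_inter_subset {ι α : Type*} [Finite α] {S : Set α}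
    (t : ι → Set α) (hout : ∀ i, ¬ t i ⊆ S) (hinter : Pairwise fun i j => t i ∩ t j ⊆ S) :
    Nat.card ι ≤ Sᶜ.ncard := by
  simp only [Set.not_subset] at hout
  choose v hv hvS using hout
  rw [← Nat.card_coe_set_eq]
  refine Nat.card_le_card_of_injective (fun i => ⟨v i, hvS i⟩) fun i j hij =>
    by_contra fun hne => ?_
  have hvij : v i = v j := congrArg Subtype.val hij
  exact hvS i (hinter hne ⟨hv i, hvij ▸ hv j⟩)

namespace SimpleGraph.Subgraph

lemma ncard_edgeSet_eq_natCard_coe_edgeSet (H : G.Subgraph) :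
    H.edgeSet.ncard = Nat.card H.coe.edgeSet := by
  rw [← image_coe_edgeSet_coe, Set.ncard_image_of_injective _
    (Sym2.map.injective Subtype.val_injective), Nat.card_coe_set_eq]

lemma ncard_edgeSet_add_one_of_isTree [Finite V] {H : G.Subgraph} (hH : H.coe.IsTree) :
    H.edgeSet.ncard + 1 = H.verts.ncard := by
  rw [ncard_edgeSet_eq_natCard_coe_edgeSet, ← Nat.card_coe_set_eq]
  exact (isTree_iff_connected_and_card.mp hH).2

lemma ncard_edgeSet_le_choose_two [Finite V] (H : G.Subgraph) :
    H.edgeSet.ncard ≤ H.verts.ncard.choose 2 := by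
  classical
  have := Fintype.ofFinite V
  rw [ncard_edgeSet_eq_natCard_coe_edgeSet, ← Nat.card_coe_set_eq H.verts,
    Nat.card_eq_fintype_card, Nat.card_eq_fintype_card, ← edgeFinset_card]
  exact card_edgeFinset_le_card_choose_two

end SimpleGraph.Subgraph

lemma natCard_mul_le_choose_two_of_isTree {ι : Type*} [Finite ι] [Finite V] {S : Set V}
    (T : ι → G.Subgraph) (hverts : ∀ i, (T i).verts = S) (htree : ∀ i, (T i).coe.IsTree)
    (hdisj : Pairwise fun i j => Disjoint (T i).edgeSet (T j).edgeSet) :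
    Nat.card ι * (S.ncard - 1) ≤ S.ncard.choose 2 := by
  have hunion : (⋃ i, (T i).edgeSet) ⊆ ((⊤ : G.Subgraph).induce S).edgeSet :=
    Set.iUnion_subset fun i => Subgraph.edgeSet_mono (hverts i ▸ Subgraph.le_induce_top_verts)
  have hedges (i : ι) : (T i).edgeSet.ncard = S.ncard - 1 := by
    have := Subgraph.ncard_edgeSet_add_one_of_isTree (htree i)
    rw [hverts] at this
    omega
  calc Nat.card ι * (S.ncard - 1) = ∑ᶠ i, (T i).edgeSet.ncard := by
        have := Fintype.ofFinite ι
        rw [finsum_congr hedges, finsum_eq_sum_of_fintype,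
          Finset.sum_const, Finset.card_univ, smul_eq_mul, Nat.card_eq_fintype_card]
    _ = (⋃ i, (T i).edgeSet).ncard :=
        (Set.ncard_iUnion_of_finite (fun _ => Set.toFinite _) hdisj).symm
    _ ≤ ((⊤ : G.Subgraph).induce S).edgeSet.ncard := Set.ncard_le_ncard hunion
    _ ≤ S.ncard.choose 2 := Subgraph.ncard_edgeSet_le_choose_two _

lemma two_mul_natCard_le_of_isTree {ι : Type*} [Finite ι] [Finite V] {S : Set V}
    (hS : 2 ≤ S.ncard) (T : ι → G.Subgraph) (hverts : ∀ i, (T i).verts = S)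
    (htree : ∀ i, (T i).coe.IsTree)
    (hdisj : Pairwise fun i j => Disjoint (T i).edgeSet (T j).edgeSet) :
    2 * Nat.card ι ≤ S.ncard := by
  have h := natCard_mul_le_choose_two_of_isTree T hverts htree hdisj
  rw [Nat.choose_two_right] at h
  refine Nat.le_of_mul_le_mul_right ?_ (Nat.sub_pos_of_lt hS)
  calc 2 * Nat.card ι * (S.ncard - 1) = 2 * (Nat.card ι * (S.ncard - 1)) := Nat.mul_assoc ..
    _ ≤ 2 * (S.ncard * (S.ncard - 1) / 2) := Nat.mul_le_mul_left 2 h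
    _ ≤ S.ncard * (S.ncard - 1) := Nat.mul_div_le ..

lemma le_of_internallyDisjoint_steinerTrees [Finite V] {S : Set V} (hS : 2 ≤ S.ncard) {m : ℕ}
    (f : Fin m → G.Subgraph) (hsteiner : ∀ i, IsSteinerTree G S (f i))
    (hdisj : ∀ i j, i ≠ j → Disjoint (f i).edgeSet (f j).edgeSet ∧
      (f i).verts ∩ (f j).verts = S) :
    m ≤ Nat.card V - (S.ncard + 1) / 2 := by
  have hinner : 2 * Nat.card {i // (f i).verts = S} ≤ S.ncard :=
    two_mul_natCard_le_of_isTree hS (fun i => f i) (fun i => i.2) (fun i => (hsteiner i).2)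
      fun i j hij => (hdisj i j (Subtype.coe_ne_coe.mpr hij)).1
  have houter : Nat.card {i // (f i).verts ≠ S} ≤ Sᶜ.ncard :=
    natCard_le_ncard_compl_of_inter_subset (fun i => (f i).verts)
      (fun i hsub => i.2 (hsub.antisymm (hsteiner i).1))
      fun i j hij => (hdisj i j (Subtype.coe_ne_coe.mpr hij)).2.le
  have hsplit : Nat.card {i // (f i).verts = S} + Nat.card {i // (f i).verts ≠ S} = m := by
    rw [← Nat.card_sum, Nat.card_congr (Equiv.sumCompl _), Nat.card_fin]
  have hcompl := Set.ncard_add_ncard_compl S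
  omega

lemma steinerConn_le [Finite V] {S : Set V} (hS : 2 ≤ S.ncard) :
    steinerConn G S ≤ Nat.card V - (S.ncard + 1) / 2 :=
  csSup_le' fun _ ⟨f, hsteiner, hdisj⟩ => le_of_internallyDisjoint_steinerTrees hS f hsteiner hdisj

lemma isSteinerTree_toSubgraph {T : SimpleGraph V} (hle : T ≤ G) (hT : T.IsTree) (S : Set V) :
    IsSteinerTree G S (toSubgraph T hle) :=
  ⟨fun v _ => Set.mem_univ v,
    (Subgraph.spanningCoeEquivCoeOfSpanning _ (toSubgraph.isSpanning T hle)).isTree_iff.mp hT⟩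

/- `steinerConn` is an `sSup` in `ℕ`, hence `0` on an unbounded set: with `|S| = 1` there are
arbitrarily many single-vertex Steiner trees. The upper bound is what makes `le_csSup` apply. -/
lemma one_le_steinerConn [Finite V] (hG : G.Connected) {S : Set V} (hS : 2 ≤ S.ncard) :
    1 ≤ steinerConn G S := by
  obtain ⟨T, hle, hT⟩ := hG.exists_isTree_le
  refine le_csSup ⟨_, fun _ ⟨f, hsteiner, hdisj⟩ =>
    le_of_internallyDisjoint_steinerTrees hS f hsteiner hdisj⟩ ?_
  exact ⟨fun _ => toSubgraph T hle, fun _ => isSteinerTree_toSubgraph hle hT S,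
    fun i j hij => absurd (Subsingleton.elim i j) hij⟩

theorem genConn_bounds {V : Type*} [Fintype V] (G : SimpleGraph V) (n k : ℕ)
    (hn : Fintype.card V = n) (hG : G.Connected) (h3 : 3 ≤ k) (hkn : k ≤ n) :
    1 ≤ genConn G k ∧ genConn G k ≤ n - (k + 1) / 2 := by
  rw [← Nat.card_eq_fintype_card] at hn
  subst hn
  obtain ⟨S, -, hSk⟩ := Set.exists_subset_card_eq (s := (Set.univ : Set V)) (n := k)
    (by rwa [Set.ncard_univ])
  have hk : 2 ≤ k := by omega
  constructor
  · exact le_csInf ⟨_, S, hSk, rfl⟩ fun _ ⟨S', hS', h⟩ => h ▸ one_le_steinerConn hG (hS' ▸ hk)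
  · calc genConn G k ≤ steinerConn G S := Nat.sInf_le ⟨S, hSk, rfl⟩
      _ ≤ Nat.card V - (k + 1) / 2 := hSk ▸ steinerConn_le (hSk ▸ hk)
end

section
/- For every connected graph G of order n and every integer k with 3 ≤ k ≤ n, the generalized k-edge-connectivity satisfies 1 ≤ λ_k(G) ≤ n − ⌈k/2⌉. -/
open SimpleGraph

variable {V : Type*}

section Aux
variable {V : Type*}

lemma acyclic_of_no_edges (G : SimpleGraph V) (h : G.edgeSet = ∅) : G.IsAcyclic := by
  intro v c hc
  have h3 : 0 < c.edges.length := by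
    rw [SimpleGraph.Walk.length_edges]
    have := hc.three_le_length; omega
  obtain ⟨e, he⟩ := List.exists_mem_of_length_pos h3
  have : e ∈ G.edgeSet := c.edges_subset_edgeSet he
  rw [h] at this
  exact this

lemma exists_tree_le' [Fintype V] :
    ∀ (m : ℕ) (G : SimpleGraph V), G.edgeSet.ncard ≤ m → G.Connected →
      ∃ T ≤ G, T.IsTree := by
  intro m
  induction m with
  | zero =>
    intro G hm hG
    have he : G.edgeSet = ∅ :=
      Set.ncard_eq_zero (G.edgeSet.toFinite) |>.mp (Nat.le_zero.mp hm)
    exact ⟨G, le_rfl, hG, acyclic_of_no_edges G he⟩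
  | succ m ih =>
    intro G hm hG
    by_cases hac : G.IsAcyclic
    · exact ⟨G, le_rfl, hG, hac⟩
    · simp only [SimpleGraph.IsAcyclic, not_forall, not_not] at hac
      obtain ⟨v, c, hc⟩ := hac
      have hlen : 0 < c.edges.length := by
        rw [SimpleGraph.Walk.length_edges]
        have := hc.three_le_length; omega
      obtain ⟨e, he⟩ := List.exists_mem_of_length_pos hlen
      induction e using Sym2.ind with
      | _ x y =>
      have hadj : G.Adj x y := c.adj_of_mem_edges he
      set G' : SimpleGraph V := G \ fromEdgeSet {s(x, y)} with hG'
      have hxy : G'.Reachable x y :=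
        (SimpleGraph.adj_and_reachable_delete_edges_iff_exists_cycle.mpr ⟨v, c, hc, he⟩).2
      have hkey : ∀ {a b : V}, (w : G.Walk a b) → G'.Reachable a b := by
        intro a b w
        induction w with
        | nil => exact SimpleGraph.Reachable.refl _
        | @cons a c₀ b h q ih' =>
          refine SimpleGraph.Reachable.trans ?_ ih'
          by_cases hee : s(a, c₀) = s(x, y)
          · rw [Sym2.eq_iff] at hee
            rcases hee with ⟨rfl, rfl⟩ | ⟨rfl, rfl⟩
            · exact hxy
            · exact hxy.symm
          · refine SimpleGraph.Adj.reachable ?_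
            simp only [hG', SimpleGraph.sdiff_adj, SimpleGraph.fromEdgeSet_adj]
            exact ⟨h, fun hmem => hee hmem.1⟩
      have hG'conn : G'.Connected := by
        rw [SimpleGraph.connected_iff]
        exact ⟨fun a b => hkey ((hG.preconnected a b).some), hG.nonempty⟩
      have hedges : G'.edgeSet = G.edgeSet \ {s(x, y)} := by
        simp [hG', SimpleGraph.edgeSet_sdiff, SimpleGraph.edgeSet_fromEdgeSet,
          SimpleGraph.edgeSet_sdiff_sdiff_isDiag]
      have hcount : G'.edgeSet.ncard ≤ m := by
        have hme : s(x, y) ∈ G.edgeSet := hadj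
        have := Set.ncard_diff_singleton_lt_of_mem hme (G.edgeSet.toFinite)
        rw [hedges]; omega
      obtain ⟨T, hT1, hT2⟩ := ih G' hcount hG'conn
      exact ⟨T, hT1.trans sdiff_le, hT2⟩

lemma IsTree.of_iso {A B : Type*} {GA : SimpleGraph A} {GB : SimpleGraph B}
    (e : GA ≃g GB) (h : GB.IsTree) : GA.IsTree := by
  refine ⟨e.connected_iff.mpr h.isConnected, fun v c hc => ?_⟩
  exact h.IsAcyclic (c.map e.toHom) (hc.map (RelIso.injective e))

/-- Any connected finite graph has an `S`-Steiner tree for any `S`. -/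
lemma exists_steinerTree [Fintype V] (G : SimpleGraph V) (hG : G.Connected) (S : Set V) :
    ∃ T : G.Subgraph, S ⊆ T.verts ∧ T.coe.IsTree := by
  obtain ⟨T, hle, hT⟩ := exists_tree_le' (G.edgeSet.ncard) G le_rfl hG
  refine ⟨SimpleGraph.toSubgraph T hle, by simp [SimpleGraph.toSubgraph], ?_⟩
  have : (SimpleGraph.toSubgraph T hle).coe = T.induce Set.univ := rfl
  rw [this]
  exact IsTree.of_iso (induceUnivIso T) hT

lemma ncard_edgeSet_coe {G : SimpleGraph V} (T : G.Subgraph) :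
    T.coe.edgeSet.ncard = T.edgeSet.ncard := by
  rw [← SimpleGraph.Subgraph.image_coe_edgeSet_coe,
    Set.ncard_image_of_injective _ (Sym2.map.injective Subtype.val_injective)]

lemma tree_card_edges [Fintype V] {G : SimpleGraph V} {T : G.Subgraph}
    (h : T.coe.IsTree) : T.edgeSet.ncard + 1 = T.verts.ncard := by
  classical
  haveI : Fintype ↥T.verts := T.verts.toFinite.fintype
  haveI : Fintype ↥T.coe.edgeSet := T.coe.edgeSet.toFinite.fintype
  have hc := h.card_edgeFinset
  rw [← ncard_edgeSet_coe]
  rw [SimpleGraph.edgeFinset] at hc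
  rw [Set.ncard_eq_toFinset_card' T.coe.edgeSet, Set.ncard_eq_toFinset_card' T.verts]
  rw [Set.toFinset_card T.verts]
  convert hc using 3

lemma steiner_tree_incident_edges [Fintype V] {G : SimpleGraph V} {S : Set V}
    {T : G.Subgraph} (hS : S ⊆ T.verts) (hT : T.coe.IsTree) {v0 : V}
    (hv0 : v0 ∈ T.verts) (hv0S : v0 ∉ S) :
    S.ncard ≤ {e ∈ T.edgeSet | ∃ v ∈ e, v ∈ S}.ncard := by
  classical
  set W := T.verts with hW
  set v0' : ↥W := ⟨v0, hv0⟩ with hv0'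
  haveI : Inhabited (Sym2 ↥W) := ⟨s(v0', v0')⟩
  have hconn : T.coe.Connected := hT.isConnected
  -- choose a path from each vertex to `v0'`
  have hpath : ∀ x : ↥W, ∃ p : T.coe.Walk x v0', p.IsPath :=
    fun x => ⟨(hconn x v0').some.toPath.1, (hconn x v0').some.toPath.2⟩
  choose p hp using hpath
  set φ : ↥W → Sym2 V := fun x => Sym2.map Subtype.val ((p x).edges.headI) with hφ
  set S' : Set ↥W := Subtype.val ⁻¹' S with hS'
  have hne : ∀ x : ↥W, x ∈ S' → x ≠ v0' := by
    rintro x hx rfl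
    exact hv0S hx
  have hmain : ∀ x : ↥W, x ∈ S' → ∃ (y : ↥W) (h : T.coe.Adj x y)
      (q : T.coe.Walk y v0'), p x = SimpleGraph.Walk.cons h q ∧ φ x = s(↑x, ↑y) := by
    intro x hx
    have hnn : ¬ (p x).Nil := SimpleGraph.Walk.not_nil_of_ne (hne x hx)
    obtain ⟨y, h, q, hq⟩ := SimpleGraph.Walk.not_nil_iff.mp hnn
    exact ⟨y, h, q, hq, by rw [hφ]; simp [hq, Sym2.map_pair_eq]⟩
  have hinj : Set.InjOn φ S' := by
    intro a ha b hb hab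
    by_contra hne'
    obtain ⟨a1, haa, qa, hwa, hφa⟩ := hmain a ha
    obtain ⟨b1, hbb, qb, hwb, hφb⟩ := hmain b hb
    rw [hφa, hφb] at hab
    rw [Sym2.eq_iff] at hab
    rcases hab with ⟨h1, h2⟩ | ⟨h1, h2⟩
    · exact hne' (Subtype.ext h1)
    · obtain rfl : b1 = a := Subtype.ext h1.symm
      obtain rfl : a1 = b := Subtype.ext h2
      have hqa : qa.IsPath := by
        have := hp b1; rw [hwa] at this; exact this.of_cons
      have hqaeq : qa = p a1 := by
        have := hT.IsAcyclic.path_unique ⟨qa, hqa⟩ ⟨p a1, hp a1⟩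
        simpa using congrArg Subtype.val this
      rw [hqaeq, hwb] at hwa
      have hpa := hp b1
      rw [hwa, SimpleGraph.Walk.cons_isPath_iff] at hpa
      refine hpa.2 ?_
      rw [SimpleGraph.Walk.support_cons]
      exact List.mem_cons_of_mem _ (SimpleGraph.Walk.start_mem_support qb)
  have himg : φ '' S' ⊆ {e ∈ T.edgeSet | ∃ v ∈ e, v ∈ S} := by
    rintro e ⟨x, hx, rfl⟩
    obtain ⟨y, hadj, q, hw, hφx⟩ := hmain x hx
    rw [hφx]
    refine ⟨?_, ⟨↑x, ?_, hx⟩⟩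
    · exact hadj
    · simp
  have hS'img : Subtype.val '' S' = S := by
    rw [hS', Subtype.image_preimage_coe]
    exact Set.inter_eq_right.mpr hS
  calc S.ncard = S'.ncard := by
        rw [← hS'img, Set.ncard_image_of_injective _ Subtype.val_injective]
    _ = (φ '' S').ncard := (Set.ncard_image_of_injOn hinj).symm
    _ ≤ _ := Set.ncard_le_ncard himg (Set.toFinite _)

lemma key_count [Fintype V] {G : SimpleGraph V} {S : Set V} {n k t : ℕ}
    (hn : Fintype.card V = n) (hS : S.ncard = k) (h3 : 3 ≤ k) (hkn : k ≤ n)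
    (f : Fin t → G.Subgraph) (hf : ∀ i, S ⊆ (f i).verts ∧ (f i).coe.IsTree)
    (hdisj : ∀ i j, i ≠ j → Disjoint (f i).edgeSet (f j).edgeSet) :
    2 * t + k ≤ 2 * n := by
  classical
  set inS : Sym2 V → Prop := fun e => ∀ v ∈ e, v ∈ S with hinS
  set incS : Sym2 V → Prop := fun e => ∃ v ∈ e, v ∈ S with hincS
  set A : Fin t → Finset (Sym2 V) :=
    fun i => (Set.toFinite ((f i).edgeSet ∩ {e | inS e})).toFinset with hA
  set B : Fin t → Finset (Sym2 V) :=
    fun i => (Set.toFinite ((f i).edgeSet ∩ {e | incS e ∧ ¬ inS e})).toFinset with hB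
  set innerF : Finset (Sym2 V) :=
    (Set.toFinite (G.edgeSet ∩ {e | inS e})).toFinset with hinner
  set crossF : Finset (Sym2 V) :=
    (Set.toFinite (G.edgeSet ∩ {e | incS e ∧ ¬ inS e})).toFinset with hcross
  set I : Finset (Fin t) := Finset.univ.filter (fun i => (f i).verts ⊆ S) with hI
  -- subset relations
  have hAsub : ∀ i, A i ⊆ innerF := by
    intro i e he
    rw [hA, Set.Finite.mem_toFinset] at he
    rw [hinner, Set.Finite.mem_toFinset]
    exact ⟨(f i).edgeSet_subset he.1, he.2⟩
  have hBsub : ∀ i, B i ⊆ crossF := by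
    intro i e he
    rw [hB, Set.Finite.mem_toFinset] at he
    rw [hcross, Set.Finite.mem_toFinset]
    exact ⟨(f i).edgeSet_subset he.1, he.2⟩
  -- disjointness
  have hdisjA : ∀ i ∈ Finset.univ, ∀ j ∈ (Finset.univ : Finset (Fin t)), i ≠ j →
      Disjoint (A i) (A j) := by
    intro i _ j _ hij
    rw [Finset.disjoint_left]
    intro e hei hej
    rw [hA, Set.Finite.mem_toFinset] at hei hej
    exact (Set.disjoint_left.mp (hdisj i j hij)) hei.1 hej.1
  have hdisjB : ∀ i ∈ Finset.univ, ∀ j ∈ (Finset.univ : Finset (Fin t)), i ≠ j →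
      Disjoint (B i) (B j) := by
    intro i _ j _ hij
    rw [Finset.disjoint_left]
    intro e hei hej
    rw [hB, Set.Finite.mem_toFinset] at hei hej
    exact (Set.disjoint_left.mp (hdisj i j hij)) hei.1 hej.1
  have sumA : ∑ i, (A i).card ≤ innerF.card := by
    rw [← Finset.card_biUnion hdisjA]
    exact Finset.card_le_card (Finset.biUnion_subset.mpr fun i _ => hAsub i)
  have sumB : ∑ i, (B i).card ≤ crossF.card := by
    rw [← Finset.card_biUnion hdisjB]
    exact Finset.card_le_card (Finset.biUnion_subset.mpr fun i _ => hBsub i)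
  -- inside trees
  have hInside : ∀ i ∈ I, k ≤ (A i).card + 1 := by
    intro i hi
    rw [hI, Finset.mem_filter] at hi
    have hverts : (f i).verts = S := le_antisymm hi.2 (hf i).1
    have hcard := tree_card_edges (hf i).2
    rw [hverts, hS] at hcard
    have hAeq : (f i).edgeSet ∩ {e | inS e} = (f i).edgeSet := by
      refine Set.inter_eq_left.mpr ?_
      intro e he
      induction e using Sym2.ind with
      | _ x y =>
        intro v hv
        rw [Sym2.mem_iff] at hv
        rcases hv with rfl | rfl
        · rw [← hverts]; exact (f i).edge_vert he
        · rw [← hverts]; exact (f i).edge_vert (SimpleGraph.Subgraph.mem_edgeSet.mp he).symm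
    have : (A i).card = (f i).edgeSet.ncard := by
      rw [hA]
      simp only [hAeq]
      rw [Set.ncard_eq_toFinset_card _ (Set.toFinite _)]
    omega
  -- outside trees
  have hOutside : ∀ i ∉ I, k ≤ (A i).card + (B i).card := by
    intro i hi
    rw [hI, Finset.mem_filter] at hi
    simp only [Finset.mem_univ, true_and] at hi
    rw [Set.not_subset] at hi
    obtain ⟨v0, hv0, hv0S⟩ := hi
    have hmain := steiner_tree_incident_edges (hf i).1 (hf i).2 hv0 hv0S
    rw [hS] at hmain
    have hsplit : {e ∈ (f i).edgeSet | ∃ v ∈ e, v ∈ S} = ↑(A i ∪ B i) := by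
      ext e
      rw [Finset.coe_union, Set.mem_union, hA, hB, Set.Finite.coe_toFinset,
        Set.Finite.coe_toFinset]
      constructor
      · rintro ⟨he, hv⟩
        by_cases hin : inS e
        · exact Or.inl ⟨he, hin⟩
        · exact Or.inr ⟨he, hv, hin⟩
      · rintro (⟨he, hin⟩ | ⟨he, hv, _⟩)
        · refine ⟨he, ?_⟩
          induction e using Sym2.ind with
          | _ x y => exact ⟨x, Sym2.mem_mk_left x y, hin x (Sym2.mem_mk_left x y)⟩
        · exact ⟨he, hv⟩
    rw [hsplit, Set.ncard_coe_finset] at hmain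
    calc k ≤ (A i ∪ B i).card := hmain
      _ ≤ (A i).card + (B i).card := Finset.card_union_le _ _
  -- summation
  have hmainsum : k * t ≤ (∑ i, (A i).card) + (∑ i, (B i).card) + I.card := by
    have hper : ∀ i ∈ (Finset.univ : Finset (Fin t)),
        k ≤ (A i).card + (B i).card + (if i ∈ I then 1 else 0) := by
      intro i _
      by_cases hi : i ∈ I
      · rw [if_pos hi]
        have := hInside i hi
        omega
      · rw [if_neg hi]
        have := hOutside i hi
        omega
    have hsum := Finset.sum_le_sum hper
    rw [Finset.sum_const, Finset.card_univ, Fintype.card_fin, smul_eq_mul] at hsum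
    rw [Finset.sum_add_distrib, Finset.sum_add_distrib] at hsum
    have hite : ∑ i : Fin t, (if i ∈ I then 1 else 0) = I.card := by
      rw [Finset.sum_ite_mem, Finset.univ_inter, Finset.card_eq_sum_ones]
    rw [hite] at hsum
    linarith [hsum]
  have hIcard : I.card * (k - 1) ≤ ∑ i, (A i).card := by
    calc I.card * (k - 1) = ∑ _i ∈ I, (k - 1) := by
          rw [Finset.sum_const, smul_eq_mul]
      _ ≤ ∑ i ∈ I, (A i).card := Finset.sum_le_sum (fun i hi => by
          have := hInside i hi; omega)
      _ ≤ ∑ i, (A i).card := Finset.sum_le_sum_of_subset (Finset.subset_univ I)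
  -- inner bound
  haveI : Fintype ↥S := S.toFinite.fintype
  have hScard : Fintype.card ↥S = k := by
    rw [← Nat.card_eq_fintype_card, Nat.card_coe_set_eq, hS]
  have hInnerBound : 2 * innerF.card ≤ k * (k - 1) := by
    have hsub : innerF ⊆ Finset.image
        (fun p : {p : Sym2 ↥S // ¬ p.IsDiag} => Sym2.map Subtype.val p.1)
        Finset.univ := by
      intro e he
      rw [hinner, Set.Finite.mem_toFinset] at he
      obtain ⟨heG, hin⟩ := he
      induction e using Sym2.ind with
      | _ x y =>
        have hx : x ∈ S := hin x (Sym2.mem_mk_left x y)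
        have hy : y ∈ S := hin y (Sym2.mem_mk_right x y)
        have hxy : x ≠ y := G.ne_of_adj heG
        refine Finset.mem_image.mpr ⟨⟨s(⟨x, hx⟩, ⟨y, hy⟩), ?_⟩, Finset.mem_univ _, ?_⟩
        · simp only [Sym2.isDiag_iff_proj_eq]
          exact fun h => hxy (congrArg Subtype.val h)
        · rw [Sym2.map_pair_eq]
    have h1 : innerF.card ≤ k.choose 2 := by
      calc innerF.card ≤ _ := Finset.card_le_card hsub
        _ ≤ Finset.univ.card := Finset.card_image_le
        _ = Fintype.card {p : Sym2 ↥S // ¬ p.IsDiag} := Finset.card_univ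
        _ = (Fintype.card ↥S).choose 2 := Sym2.card_subtype_not_diag
        _ = k.choose 2 := by rw [hScard]
    have h2 : k.choose 2 = k * (k - 1) / 2 := Nat.choose_two_right k
    have h3 : k * (k - 1) / 2 * 2 ≤ k * (k - 1) := Nat.div_mul_le_self _ _
    omega
  -- cross bound
  have hCrossBound : crossF.card ≤ k * (n - k) := by
    have hsub : crossF ⊆ Finset.image (fun p : V × V => s(p.1, p.2))
        (S.toFinite.toFinset ×ˢ (S.toFinite.toFinset)ᶜ) := by
      intro e he
      rw [hcross, Set.Finite.mem_toFinset] at he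
      obtain ⟨heG, hv, hnin⟩ := he
      induction e using Sym2.ind with
      | _ x y =>
        have hnin' : ∃ w ∈ s(x, y), w ∉ S := by
          by_contra hcon
          push_neg at hcon
          exact hnin hcon
        obtain ⟨w, hw, hwS⟩ := hnin'
        obtain ⟨v, hvmem, hvS⟩ := hv
        rw [Sym2.mem_iff] at hw hvmem
        have hxyne : x ≠ y := G.ne_of_adj heG
        rcases hw with rfl | rfl
        · have hyS : y ∈ S := by
            rcases hvmem with rfl | rfl
            · exact absurd hvS hwS
            · exact hvS
          refine Finset.mem_image.mpr ⟨(y, w), ?_, ?_⟩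
          · rw [Finset.mem_product, Finset.mem_compl, Set.Finite.mem_toFinset,
              Set.Finite.mem_toFinset]
            exact ⟨hyS, hwS⟩
          · exact Sym2.eq_swap
        · have hxS : x ∈ S := by
            rcases hvmem with rfl | rfl
            · exact hvS
            · exact absurd hvS hwS
          refine Finset.mem_image.mpr ⟨(x, w), ?_, rfl⟩
          rw [Finset.mem_product, Finset.mem_compl, Set.Finite.mem_toFinset,
            Set.Finite.mem_toFinset]
          exact ⟨hxS, hwS⟩
    calc crossF.card ≤ _ := Finset.card_le_card hsub
      _ ≤ (S.toFinite.toFinset ×ˢ (S.toFinite.toFinset)ᶜ).card := Finset.card_image_le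
      _ = S.toFinite.toFinset.card * (S.toFinite.toFinset)ᶜ.card := Finset.card_product _ _
      _ = k * (n - k) := by
          rw [Finset.card_compl, ← Set.ncard_eq_toFinset_card _ S.toFinite, hS, hn]
  -- final arithmetic
  obtain ⟨d, rfl⟩ : ∃ d, n = k + d := ⟨n - k, by omega⟩
  obtain ⟨e, rfl⟩ : ∃ e, k = e + 1 := ⟨k - 1, by omega⟩
  have he2 : 2 ≤ e := by omega
  set a := ∑ i, (A i).card
  set b := ∑ i, (B i).card
  have hIk : 2 * I.card ≤ e + 1 := by
    have h1 : 2 * (I.card * e) ≤ 2 * innerF.card := by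
      have := hIcard.trans sumA
      simpa using Nat.mul_le_mul_left 2 this
    have h2 : 2 * I.card * e ≤ (e + 1) * e := by
      calc 2 * I.card * e = 2 * (I.card * e) := by ring
        _ ≤ 2 * innerF.card := h1
        _ ≤ (e + 1) * ((e + 1) - 1) := hInnerBound
        _ = (e + 1) * e := by simp
    have hepos : 0 < e := by omega
    exact Nat.le_of_mul_le_mul_right h2 hepos
  have hfin : (e + 1) * (2 * t) ≤ (e + 1) * (e + 2 * d + 1) := by
    have hd : (e + 1 + d) - (e + 1) = d := by omega
    calc (e + 1) * (2 * t) = 2 * ((e + 1) * t) := by ring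
      _ ≤ 2 * (a + b + I.card) := Nat.mul_le_mul_left 2 hmainsum
      _ = 2 * a + 2 * b + 2 * I.card := by ring
      _ ≤ (2 * innerF.card) + (2 * crossF.card) + 2 * I.card := by
          have h2a := Nat.mul_le_mul_left 2 sumA
          have h2b := Nat.mul_le_mul_left 2 sumB
          omega
      _ ≤ ((e + 1) * e) + (2 * ((e + 1) * d)) + (e + 1) := by
          have h1 : (e + 1) * ((e + 1) - 1) = (e + 1) * e := by simp
          have h2 := hCrossBound
          rw [hd] at h2
          have h3 := Nat.mul_le_mul_left 2 h2
          omega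
      _ = (e + 1) * (e + 2 * d + 1) := by ring
  have := Nat.le_of_mul_le_mul_left hfin (by omega : 0 < e + 1)
  omega

end Aux

section Final

variable {V : Type*}

theorem genEdgeConn_bounds' {V : Type*} [Fintype V] (G : SimpleGraph V) (n k : ℕ)
    (hn : Fintype.card V = n) (hG : G.Connected) (h3 : 3 ≤ k) (hkn : k ≤ n) :
    1 ≤ genEdgeConn G k ∧ genEdgeConn G k ≤ n - (k + 1) / 2 := by
  classical
  -- every family of edge-disjoint Steiner trees for a k-set has bounded size
  have hbd : ∀ S : Set V, S.ncard = k → ∀ m,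
      (∃ f : Fin m → G.Subgraph, (∀ i, IsSteinerTree G S (f i)) ∧
        ∀ i j, i ≠ j → Disjoint (f i).edgeSet (f j).edgeSet) → 2 * m + k ≤ 2 * n := by
    intro S hS m ⟨f, hf, hdisj⟩
    exact key_count hn hS h3 hkn f (fun i => hf i) hdisj
  have hub : ∀ S : Set V, S.ncard = k → steinerEdgeConn G S ≤ n - (k + 1) / 2 := by
    intro S hS
    apply csSup_le
    · exact ⟨0, Fin.elim0, fun i => i.elim0, fun i => i.elim0⟩
    · intro m hm
      have := hbd S hS m hm
      omega
  have hBdd : ∀ S : Set V, S.ncard = k →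
      BddAbove {m : ℕ | ∃ f : Fin m → G.Subgraph, (∀ i, IsSteinerTree G S (f i)) ∧
        ∀ i j, i ≠ j → Disjoint (f i).edgeSet (f j).edgeSet} := by
    intro S hS
    refine ⟨n, fun m hm => ?_⟩
    have := hbd S hS m hm
    omega
  have hlb : ∀ S : Set V, S.ncard = k → 1 ≤ steinerEdgeConn G S := by
    intro S hS
    apply le_csSup (hBdd S hS)
    obtain ⟨T, hTS, hTtree⟩ := exists_steinerTree G hG S
    exact ⟨fun _ => T, fun _ => ⟨hTS, hTtree⟩, fun i j hij => absurd (Subsingleton.elim i j) hij⟩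
  obtain ⟨S0, _, hS0⟩ : ∃ t ⊆ (Set.univ : Set V), t.ncard = k := by
    apply Set.exists_subset_card_eq
    rw [Set.ncard_univ, Nat.card_eq_fintype_card, hn]
    exact hkn
  have hne : {m : ℕ | ∃ S : Set V, S.ncard = k ∧ steinerEdgeConn G S = m}.Nonempty :=
    ⟨steinerEdgeConn G S0, S0, hS0, rfl⟩
  constructor
  · obtain ⟨S1, hS1, heq⟩ := Nat.sInf_mem hne
    rw [genEdgeConn, ← heq]
    exact hlb S1 hS1
  · exact le_trans (Nat.sInf_le ⟨S0, hS0, rfl⟩) (hub S0 hS0)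

end Final

theorem genEdgeConn_bounds {V : Type*} [Fintype V] (G : SimpleGraph V) (n k : ℕ)
    (hn : Fintype.card V = n) (hG : G.Connected) (h3 : 3 ≤ k) (hkn : k ≤ n) :
    1 ≤ genEdgeConn G k ∧ genEdgeConn G k ≤ n - (k + 1) / 2 := by
  exact genEdgeConn_bounds' G n k hn hG h3 hkn
end

section
/- For every connected graph G, every k ≥ 2, the generalized k-connectivity is at most the generalized k-edge-connectivity, which in turn is at most the minimum degree: κ_k(G) ≤ λ_k(G) ≤ δ(G). -/
open SimpleGraph

variable {V : Type*}

section Aux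
open Classical

lemma exists_edge_at {G : SimpleGraph V} {S : Set V} {T : G.Subgraph} {v : V}
    (hT : IsSteinerTree G S T) (hv : v ∈ S) (hcard : 2 ≤ S.ncard) :
    ∃ e ∈ T.edgeSet, v ∈ e := by
  obtain ⟨hS, htree⟩ := hT
  obtain ⟨w, hw, hwv⟩ := Set.exists_ne_of_one_lt_ncard (show 1 < S.ncard by omega) v
  have hv' : v ∈ T.verts := hS hv
  have hw' : w ∈ T.verts := hS hw
  obtain ⟨p⟩ := htree.isConnected.preconnected ⟨v, hv'⟩ ⟨w, hw'⟩
  cases p with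
  | nil => exact absurd rfl hwv
  | @cons _ u _ h p' =>
    exact ⟨s(v, u.1), Subgraph.mem_edgeSet.mpr h, Sym2.mem_mk_left _ _⟩

lemma steinerEdgeConn_set_le [Fintype V] {G : SimpleGraph V} {S : Set V} {v : V}
    (hv : v ∈ S) (hcard : 2 ≤ S.ncard) :
    ∀ n ∈ {n : ℕ | ∃ f : Fin n → G.Subgraph, (∀ i, IsSteinerTree G S (f i)) ∧
      ∀ i j, i ≠ j → Disjoint (f i).edgeSet (f j).edgeSet},
      n ≤ (G.neighborSet v).ncard := by
  rintro n ⟨f, hf, hdisj⟩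
  choose e he hve using fun i => exists_edge_at (hf i) hv hcard
  have hmem : ∀ i, e i ∈ G.incidenceSet v := fun i =>
    ⟨(f i).edgeSet_subset (he i), hve i⟩
  have hinj : Function.Injective (fun i => (⟨e i, hmem i⟩ : G.incidenceSet v)) := by
    intro i j hij
    by_contra hne
    have h1 : e i ∈ (f i).edgeSet := he i
    have h2 : e i ∈ (f j).edgeSet := by
      have : e i = e j := congrArg Subtype.val hij
      rw [this]; exact he j
    exact (hdisj i j hne).ne_of_mem h1 h2 rfl
  calc n = Nat.card (Fin n) := by simp
    _ ≤ Nat.card (G.incidenceSet v) := Nat.card_le_card_of_injective _ hinj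
    _ = Nat.card (G.neighborSet v) := Nat.card_congr (G.incidenceSetEquivNeighborSet v)
    _ = (G.neighborSet v).ncard := Nat.card_coe_set_eq _

lemma trivial_mem {G : SimpleGraph V} {S : Set V} :
    (0 : ℕ) ∈ {n : ℕ | ∃ f : Fin n → G.Subgraph, (∀ i, IsSteinerTree G S (f i)) ∧
      ∀ i j, i ≠ j → Disjoint (f i).edgeSet (f j).edgeSet} :=
  ⟨fun i => i.elim0, fun i => i.elim0, fun i => i.elim0⟩

lemma steinerEdgeConn_le_deg [Fintype V] {G : SimpleGraph V} {S : Set V} {v : V}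
    (hv : v ∈ S) (hcard : 2 ≤ S.ncard) :
    steinerEdgeConn G S ≤ (G.neighborSet v).ncard :=
  csSup_le ⟨0, trivial_mem⟩ (steinerEdgeConn_set_le hv hcard)

lemma steinerConn_le_steinerEdgeConn [Fintype V] {G : SimpleGraph V} {S : Set V}
    (hcard : 2 ≤ S.ncard) : steinerConn G S ≤ steinerEdgeConn G S := by
  have hne : S.ncard ≠ 0 := by omega
  obtain ⟨v, hv⟩ : S.Nonempty := Set.nonempty_of_ncard_ne_zero hne
  refine csSup_le_csSup ⟨(G.neighborSet v).ncard, ?_⟩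
    ⟨0, fun i => i.elim0, fun i => i.elim0, fun i => i.elim0⟩ ?_
  · intro n hn; exact steinerEdgeConn_set_le hv hcard n hn
  · rintro n ⟨f, hf, h⟩
    exact ⟨f, hf, fun i j hij => (h i j hij).1⟩

end Aux


theorem genConn_le_genEdgeConn_le_minDeg {V : Type*} [Fintype V] [Nonempty V]
    (G : SimpleGraph V) (hG : G.Connected) (k : ℕ) (hk : 2 ≤ k) :
    genConn G k ≤ genEdgeConn G k ∧ genEdgeConn G k ≤ minDeg G := by
  by_cases hS : ∃ S : Set V, S.ncard = k
  · obtain ⟨S, hScard⟩ := hS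
    have hne : {m : ℕ | ∃ S : Set V, S.ncard = k ∧ steinerEdgeConn G S = m}.Nonempty :=
      ⟨steinerEdgeConn G S, S, hScard, rfl⟩
    constructor
    · obtain ⟨S₀, hS₀, hval⟩ := Nat.sInf_mem hne
      calc genConn G k ≤ steinerConn G S₀ := Nat.sInf_le ⟨S₀, hS₀, rfl⟩
        _ ≤ steinerEdgeConn G S₀ := steinerConn_le_steinerEdgeConn (by omega)
        _ = genEdgeConn G k := hval
    · have hmne : {d : ℕ | ∃ v : V, (G.neighborSet v).ncard = d}.Nonempty :=
        ⟨_, Classical.arbitrary V, rfl⟩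
      obtain ⟨v, hv⟩ := Nat.sInf_mem hmne
      have hkV : k ≤ Fintype.card V := by
        rw [← hScard]
        have := Set.ncard_le_ncard (Set.subset_univ S) Set.finite_univ
        simpa [Set.ncard_univ, Nat.card_eq_fintype_card] using this
      obtain ⟨u, hvu, -, hucard⟩ := Finset.exists_subsuperset_card_eq
        (Finset.subset_univ {v}) (by simpa using show 1 ≤ k by omega)
        (by simpa using hkV)
      have hucard' : (↑u : Set V).ncard = k := by
        rw [Set.ncard_coe_finset]; exact hucard
      have hvmem : v ∈ (↑u : Set V) := by
        simpa using hvu (Finset.mem_singleton_self v)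
      calc genEdgeConn G k ≤ steinerEdgeConn G (↑u : Set V) :=
            Nat.sInf_le ⟨↑u, hucard', rfl⟩
        _ ≤ (G.neighborSet v).ncard := steinerEdgeConn_le_deg hvmem (by omega)
        _ = minDeg G := hv
  · have h1 : {m : ℕ | ∃ S : Set V, S.ncard = k ∧ steinerConn G S = m} = ∅ := by
      ext m
      simp only [Set.mem_setOf_eq, Set.mem_empty_iff_false, iff_false]
      rintro ⟨S, hS', -⟩; exact hS ⟨S, hS'⟩
    have h2 : {m : ℕ | ∃ S : Set V, S.ncard = k ∧ steinerEdgeConn G S = m} = ∅ := by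
      ext m
      simp only [Set.mem_setOf_eq, Set.mem_empty_iff_false, iff_false]
      rintro ⟨S, hS', -⟩; exact hS ⟨S, hS'⟩
    constructor <;> simp [genConn, genEdgeConn, h1, h2, Nat.sInf_empty]
end

section
/- For n ≥ 3k, the graph G = K_k ∨ (n−k)K_1 (the join of a complete graph on k vertices with n−k isolated vertices) satisfies κ_k(G) = λ_k(G) = κ(G) = λ(G) = δ(G) = k. -/
open SimpleGraph

variable {V : Type*}

/-! The upper bounds all come from a vertex outside the clique `K`, whose degree is `k`: the
`k`-set of such vertices has at most `k` edge-disjoint Steiner trees, since each uses its own edge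
at such a vertex; and deleting `K`, or the edges at such a vertex, disconnects the graph.

For the lower bounds, every `k`-set `S` has `k` internally disjoint Steiner trees: write
`K = {c_i}`, pick distinct `u_i ∉ K ∪ S` (here `n ≥ 3k` is used) and take the double star with
centres `c_i`, `u_i`, joining `c_i` to `S \ K` and `u_i` to `S ∩ K`. Fewer than `k` edges miss one
of these trees, which bounds `λ`; and fewer than `k` vertices miss a vertex of `K`, adjacent to
everything, which bounds `κ`. -/

section Counting

variable {α : Type*} [Finite α] {s : Set α} {m : ℕ}

lemma Set.le_ncard_of_injective {f : Fin m → α} (hf : Function.Injective f)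
    (hs : ∀ i, f i ∈ s) : m ≤ s.ncard :=
  calc m = (Set.range f).ncard := by rw [Set.ncard_range_of_injective hf, Nat.card_fin]
    _ ≤ s.ncard := Set.ncard_le_ncard (Set.range_subset_iff.2 hs)

lemma Set.exists_injective_of_le_ncard (h : m ≤ s.ncard) :
    ∃ f : Fin m → α, Function.Injective f ∧ ∀ i, f i ∈ s := by
  obtain ⟨t, hts, htm⟩ := Set.exists_subset_card_eq h
  let e : t ≃ Fin m := Finite.equivFinOfCardEq (by rw [Nat.card_coe_set_eq, htm])
  exact ⟨fun i => e.symm i, Subtype.val_injective.comp e.symm.injective,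
    fun i => hts (e.symm i).2⟩

end Counting

namespace SimpleGraph

lemma isAcyclic_of_adj_unique_off_pair (H : SimpleGraph V) (p q : V)
    (h : ∀ x, x ≠ p → x ≠ q → ∀ y z, H.Adj x y → H.Adj x z → y = z) :
    H.IsAcyclic := by
  intro v c hc
  have two_nbrs : ∀ x ∈ c.support,
      ∃ y z, y ≠ z ∧ c.toSubgraph.Adj x y ∧ c.toSubgraph.Adj x z := by
    intro x hx
    obtain ⟨y, z, hyz, hnbr⟩ := Set.ncard_eq_two.1 (hc.ncard_neighborSet_toSubgraph_eq_two hx)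
    have hy : y ∈ c.toSubgraph.neighborSet x := by simp [hnbr]
    have hz : z ∈ c.toSubgraph.neighborSet x := by simp [hnbr]
    exact ⟨y, z, hyz, hy, hz⟩
  obtain ⟨x, hx, hxp, hxq⟩ : ∃ x ∈ c.support, x ≠ p ∧ x ≠ q := by
    by_contra! hpq
    obtain ⟨y, z, hyz, hy, hz⟩ := two_nbrs v c.start_mem_support
    have hyv := (c.toSubgraph.adj_sub hy).ne
    have hzv := (c.toSubgraph.adj_sub hz).ne
    have hv := hpq v c.start_mem_support
    have hy' := hpq y (c.mem_support_of_adj_toSubgraph hy.symm)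
    have hz' := hpq z (c.mem_support_of_adj_toSubgraph hz.symm)
    grind (splitImp := true)
  obtain ⟨y, z, hyz, hy, hz⟩ := two_nbrs x hx
  exact hyz (h x hxp hxq y z (c.toSubgraph.adj_sub hy) (c.toSubgraph.adj_sub hz))

variable {G : SimpleGraph V}

/-- The double star with adjacent centres `a`, `b`, leaves `A` on `a` and leaves `B` on `b`. -/
def doubleStar {a b : V} {A B : Set V} (hab : G.Adj a b) (hA : ∀ x ∈ A, G.Adj a x)
    (hB : ∀ y ∈ B, G.Adj b y) : G.Subgraph where
  verts := insert a (insert b (A ∪ B))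
  Adj x y := (x = a ∧ y ∈ insert b A) ∨ (y = a ∧ x ∈ insert b A) ∨
    (x = b ∧ y ∈ B) ∨ (y = b ∧ x ∈ B)
  adj_sub := by
    rintro x y (⟨rfl, rfl | hy⟩ | ⟨rfl, rfl | hx⟩ | ⟨rfl, hy⟩ | ⟨rfl, hx⟩)
    exacts [hab, hA y hy, hab.symm, (hA x hx).symm, hB y hy, (hB x hx).symm]
  edge_vert := by
    intro x y h
    simp only [Set.mem_insert_iff, Set.mem_union] at h ⊢
    tauto
  symm := ⟨fun _ _ => by tauto⟩

lemma doubleStar_isTree {a b : V} {A B : Set V} (hab : G.Adj a b) (hA : ∀ x ∈ A, G.Adj a x)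
    (hB : ∀ y ∈ B, G.Adj b y) (hAB : Disjoint A B) : (doubleStar hab hA hB).coe.IsTree := by
  set T := doubleStar hab hA hB
  have ha : a ∈ T.verts := Or.inl rfl
  have hb : b ∈ T.verts := Or.inr (Or.inl rfl)
  have reach_a : ∀ x : T.verts, T.coe.Reachable x ⟨a, ha⟩ := by
    have hba : T.coe.Reachable ⟨b, hb⟩ ⟨a, ha⟩ :=
      Adj.reachable (Subgraph.Adj.coe (by simp [T, doubleStar]))
    rintro ⟨x, rfl | rfl | hxA | hxB⟩
    · rfl
    · exact hba
    · exact Adj.reachable (Subgraph.Adj.coe (by simp [T, doubleStar, hxA]))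
    · exact (Adj.reachable (Subgraph.Adj.coe (by simp [T, doubleStar, hxB]))).trans hba
  have hconn : T.coe.Connected :=
    (connected_iff _).2 ⟨fun x y => (reach_a x).trans (reach_a y).symm, ⟨⟨a, ha⟩⟩⟩
  refine ⟨hconn, ?_⟩
  refine isAcyclic_of_adj_unique_off_pair _ ⟨a, ha⟩ ⟨b, hb⟩ ?_
  rintro ⟨x, hx⟩ hxa hxb ⟨y, hy⟩ ⟨z, hz⟩ hxy hxz
  simp only [ne_eq, Subtype.mk.injEq] at hxa hxb
  have leaf : ∀ w, T.Adj x w → (w = a ∧ x ∈ A) ∨ (w = b ∧ x ∈ B) := by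
    intro w h
    simp only [T, doubleStar, Set.mem_insert_iff] at h
    tauto
  ext
  rcases leaf y hxy with ⟨rfl, hxA⟩ | ⟨rfl, hxB⟩ <;>
    rcases leaf z hxz with ⟨rfl, hxA'⟩ | ⟨rfl, hxB'⟩
  all_goals first | rfl | exact (Set.disjoint_left.1 hAB (by assumption) (by assumption)).elim

end SimpleGraph

section Steiner

variable {G : SimpleGraph V} {S : Set V}

def IsEdgeDisjointSteinerFamily (G : SimpleGraph V) (S : Set V) {m : ℕ}
    (f : Fin m → G.Subgraph) : Prop :=
  (∀ i, IsSteinerTree G S (f i)) ∧ ∀ i j, i ≠ j → Disjoint (f i).edgeSet (f j).edgeSet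

def IsInternallyDisjointSteinerFamily (G : SimpleGraph V) (S : Set V) {m : ℕ}
    (f : Fin m → G.Subgraph) : Prop :=
  (∀ i, IsSteinerTree G S (f i)) ∧ ∀ i j, i ≠ j →
    Disjoint (f i).edgeSet (f j).edgeSet ∧ (f i).verts ∩ (f j).verts = S

lemma IsInternallyDisjointSteinerFamily.isEdgeDisjointSteinerFamily {m : ℕ}
    {f : Fin m → G.Subgraph} (hf : IsInternallyDisjointSteinerFamily G S f) :
    IsEdgeDisjointSteinerFamily G S f :=
  ⟨hf.1, fun i j hij => (hf.2 i j hij).1⟩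

lemma IsSteinerTree.reachable {T : G.Subgraph} (hT : IsSteinerTree G S T) {H : SimpleGraph V}
    (hTH : ∀ x y, T.Adj x y → H.Adj x y) {u v : V} (hu : u ∈ S) (hv : v ∈ S) :
    H.Reachable u v :=
  (hT.2.connected.preconnected ⟨u, hT.1 hu⟩ ⟨v, hT.1 hv⟩).map
    ⟨Subtype.val, fun h => hTH _ _ h⟩

lemma IsSteinerTree.exists_adj {T : G.Subgraph} (hT : IsSteinerTree G S T) (hS : S.Nontrivial)
    {s : V} (hs : s ∈ S) : ∃ x, T.Adj s x := by
  obtain ⟨t, ht, hts⟩ := hS.exists_ne s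
  obtain ⟨w⟩ := hT.2.connected.preconnected ⟨s, hT.1 hs⟩ ⟨t, hT.1 ht⟩
  exact ⟨_, w.adj_snd (Walk.not_nil_of_ne fun h => hts (congrArg Subtype.val h).symm)⟩

lemma IsEdgeDisjointSteinerFamily.le_ncard_neighborSet [Finite V] {m : ℕ}
    {f : Fin m → G.Subgraph} (hf : IsEdgeDisjointSteinerFamily G S f) (hS : S.Nontrivial)
    {s : V} (hs : s ∈ S) : m ≤ (G.neighborSet s).ncard := by
  choose x hx using fun i => (hf.1 i).exists_adj hS hs
  have hinj : Function.Injective x := fun i j hij => by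
    by_contra hne
    exact Set.disjoint_left.1 (hf.2 i j hne) (Subgraph.mem_edgeSet.2 (hx i))
      (Subgraph.mem_edgeSet.2 (hij ▸ hx j))
  exact Set.le_ncard_of_injective hinj fun i => (hx i).adj_sub

lemma bddAbove_setOf_isEdgeDisjointSteinerFamily [Finite V] (hS : S.Nontrivial) :
    BddAbove {m | ∃ f : Fin m → G.Subgraph, IsEdgeDisjointSteinerFamily G S f} := by
  obtain ⟨s, hs⟩ := hS.nonempty
  exact ⟨_, fun _ ⟨_, hf⟩ => hf.le_ncard_neighborSet hS hs⟩

lemma steinerEdgeConn_le_ncard_neighborSet [Finite V] (hS : S.Nontrivial) {s : V} (hs : s ∈ S) :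
    steinerEdgeConn G S ≤ (G.neighborSet s).ncard :=
  csSup_le' fun _ ⟨_, hf⟩ => IsEdgeDisjointSteinerFamily.le_ncard_neighborSet hf hS hs

lemma steinerConn_le_steinerEdgeConn_s15 [Finite V] (hS : S.Nontrivial) :
    steinerConn G S ≤ steinerEdgeConn G S :=
  csSup_le' fun _ ⟨f, hf⟩ =>
    le_csSup (bddAbove_setOf_isEdgeDisjointSteinerFamily hS)
      ⟨f, IsInternallyDisjointSteinerFamily.isEdgeDisjointSteinerFamily hf⟩

lemma IsInternallyDisjointSteinerFamily.le_steinerConn [Finite V] {m : ℕ}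
    {f : Fin m → G.Subgraph} (hf : IsInternallyDisjointSteinerFamily G S f) (hS : S.Nontrivial) :
    m ≤ steinerConn G S := by
  refine le_csSup ((bddAbove_setOf_isEdgeDisjointSteinerFamily (G := G) hS).mono ?_) ⟨f, hf⟩
  rintro _ ⟨g, hg⟩
  exact ⟨g, IsInternallyDisjointSteinerFamily.isEdgeDisjointSteinerFamily hg⟩

end Steiner

section EdgeConnectivity

variable {G : SimpleGraph V}

lemma not_connected_deleteEdges_incidenceSet {v w : V} (hvw : v ≠ w) :
    ¬ (G.deleteEdges (G.incidenceSet v)).Connected := fun h => by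
  obtain ⟨p⟩ := h.preconnected v w
  have hadj := p.adj_snd (Walk.not_nil_of_ne hvw)
  rw [deleteEdges_adj] at hadj
  exact hadj.2 ⟨hadj.1, Sym2.mem_mk_left _ _⟩

lemma ncard_incidenceSet (v : V) : (G.incidenceSet v).ncard = (G.neighborSet v).ncard :=
  by classical exact Nat.card_congr (G.incidenceSetEquivNeighborSet v)

/-- Fewer than `k` edges miss one of `k` edge-disjoint Steiner trees through `u` and `v`. -/
lemma le_ncard_of_not_connected_deleteEdges [Finite V] [Nonempty V] {k : ℕ}
    (h : ∀ u v, u ≠ v → ∃ S : Set V, u ∈ S ∧ v ∈ S ∧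
      ∃ f : Fin k → G.Subgraph, IsEdgeDisjointSteinerFamily G S f)
    {M : Set (Sym2 V)} (hM : ¬ (G.deleteEdges M).Connected) : k ≤ M.ncard := by
  by_contra! hlt
  refine hM (Connected.mk fun u v => ?_)
  obtain rfl | huv := eq_or_ne u v
  · rfl
  obtain ⟨S, hu, hv, f, hf⟩ := h u v huv
  obtain ⟨i, hi⟩ : ∃ i, Disjoint (f i).edgeSet M := by
    by_contra! hall
    choose e he hM using fun i => Set.not_disjoint_iff.1 (hall i)
    have hinj : Function.Injective e := fun i j hij => by
      by_contra hne
      exact Set.disjoint_left.1 (hf.2 i j hne) (he i) (hij ▸ he j)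
    exact hlt.not_ge (Set.le_ncard_of_injective hinj hM)
  exact (hf.1 i).reachable (fun x y hxy => (deleteEdges_adj ..).2
    ⟨hxy.adj_sub, Set.disjoint_left.1 hi (Subgraph.mem_edgeSet.2 hxy)⟩) hu hv

end EdgeConnectivity

/-- `G` is the complete split graph with clique `K`: the join of the complete graph on `K` and the
empty graph on `Kᶜ`. -/
def IsCompleteSplit (G : SimpleGraph V) (K : Set V) : Prop :=
  ∀ u v, G.Adj u v ↔ u ≠ v ∧ (u ∈ K ∨ v ∈ K)

namespace IsCompleteSplit

variable {G : SimpleGraph V} {K : Set V}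

lemma neighborSet_of_notMem (hG : IsCompleteSplit G K) {v : V} (hv : v ∉ K) :
    G.neighborSet v = K := by
  ext w
  simp only [mem_neighborSet, hG v w, hv, false_or]
  exact ⟨And.right, fun hw => ⟨fun h => hv (h ▸ hw), hw⟩⟩

lemma neighborSet_of_mem (hG : IsCompleteSplit G K) {v : V} (hv : v ∈ K) :
    G.neighborSet v = {v}ᶜ := by
  ext w
  simp [hG v w, hv, eq_comm]

lemma subset_of_not_connected_induce (hG : IsCompleteSplit G K) {A : Set V}
    (hA : ¬ (G.induce Aᶜ).Connected) : K ⊆ A := by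
  intro c hc
  by_contra hcA
  have reach_c : ∀ x : ↥Aᶜ, (G.induce Aᶜ).Reachable x ⟨c, hcA⟩ := by
    rintro ⟨x, hx⟩
    obtain rfl | hxc := eq_or_ne x c
    · rfl
    · exact Adj.reachable (show G.Adj x c from (hG x c).2 ⟨hxc, Or.inr hc⟩)
  have : Nonempty ↥Aᶜ := ⟨⟨c, hcA⟩⟩
  exact hA ⟨fun x y => (reach_c x).trans (reach_c y).symm⟩

lemma not_connected_induce_compl (hG : IsCompleteSplit G K) (hKc : Kᶜ.Nontrivial) :
    ¬ (G.induce Kᶜ).Connected := fun h => by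
  obtain ⟨u, hu, v, hv, huv⟩ := hKc
  obtain ⟨p⟩ := h.preconnected ⟨u, hu⟩ ⟨v, hv⟩
  have hadj : G.Adj u p.snd :=
    p.adj_snd (Walk.not_nil_of_ne fun h => huv (congrArg Subtype.val h))
  rcases ((hG _ _).1 hadj).2 with h | h
  exacts [hu h, p.snd.2 h]

lemma vertConn_eq [Finite V] (hG : IsCompleteSplit G K) (hKc : Kᶜ.Nontrivial) :
    vertConn G = K.ncard :=
  IsLeast.csInf_eq ⟨⟨K, rfl, hG.not_connected_induce_compl hKc⟩,
    fun _ ⟨_, hA, hA'⟩ => hA ▸ Set.ncard_le_ncard (hG.subset_of_not_connected_induce hA')⟩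

lemma minDeg_eq [Finite V] (hG : IsCompleteSplit G K) (hKc : Kᶜ.Nonempty) :
    minDeg G = K.ncard := by
  obtain ⟨w, hw⟩ := hKc
  refine IsLeast.csInf_eq ⟨⟨w, by rw [hG.neighborSet_of_notMem hw]⟩, ?_⟩
  rintro _ ⟨v, rfl⟩
  by_cases hv : v ∈ K
  · have hKc := (Set.ncard_pos (Set.toFinite Kᶜ)).2 ⟨w, hw⟩
    have hKsum := Set.ncard_add_ncard_compl K
    have hvsum := Set.ncard_add_ncard_compl {v}
    rw [Set.ncard_singleton] at hvsum
    rw [hG.neighborSet_of_mem hv]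
    omega
  · rw [hG.neighborSet_of_notMem hv]

/-- The Steiner tree for `S` with centres `c ∈ K`, joined to `S \ K`, and `u ∉ K`, joined to
`S ∩ K`. -/
def steinerTree (hG : IsCompleteSplit G K) (S : Set V) {c u : V} (hc : c ∈ K) (hu : u ∉ K) :
    G.Subgraph :=
  doubleStar (A := S \ K) (B := S ∩ K) ((hG c u).2 ⟨fun h => hu (h ▸ hc), Or.inl hc⟩)
    (fun x hx => (hG c x).2 ⟨fun h => hx.2 (h ▸ hc), Or.inl hc⟩)
    (fun y hy => (hG u y).2 ⟨fun h => hu (h ▸ hy.2), Or.inr hy.2⟩)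

lemma steinerTree_verts (hG : IsCompleteSplit G K) (S : Set V) {c u : V} (hc : c ∈ K)
    (hu : u ∉ K) : (hG.steinerTree S hc hu).verts = insert c (insert u S) := by
  simp only [steinerTree, doubleStar, Set.sdiff_union_inter]

lemma isSteinerTree_steinerTree (hG : IsCompleteSplit G K) (S : Set V) {c u : V} (hc : c ∈ K)
    (hu : u ∉ K) : IsSteinerTree G S (hG.steinerTree S hc hu) := by
  refine ⟨?_, doubleStar_isTree _ _ _ Set.disjoint_sdiff_inter⟩
  rw [steinerTree_verts]
  exact (Set.subset_insert u S).trans (Set.subset_insert c _)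

lemma steinerTree_internallyDisjoint (hG : IsCompleteSplit G K) (S : Set V) {c c' u u' : V}
    (hc : c ∈ K) (hc' : c' ∈ K) (hu : u ∉ K) (hu' : u' ∉ K) (hcc' : c ≠ c')
    (huu' : u ≠ u') (huS : u ∉ S) (hu'S : u' ∉ S) :
    Disjoint (hG.steinerTree S hc hu).edgeSet (hG.steinerTree S hc' hu').edgeSet ∧
      (hG.steinerTree S hc hu).verts ∩ (hG.steinerTree S hc' hu').verts = S := by
  have hcu' : c ≠ u' := fun h => hu' (h ▸ hc)
  have huc' : u ≠ c' := fun h => hu (h ▸ hc')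
  constructor
  · rw [Set.disjoint_left]
    intro e
    induction e using Sym2.ind with
    | _ x y =>
      simp only [Subgraph.mem_edgeSet, steinerTree, doubleStar, Set.mem_insert_iff,
        Set.mem_sdiff, Set.mem_inter_iff]
      grind
  · rw [steinerTree_verts, steinerTree_verts]
    ext x
    simp only [Set.mem_inter_iff, Set.mem_insert_iff]
    grind

lemma exists_isInternallyDisjointSteinerFamily [Finite V] (hG : IsCompleteSplit G K) {k : ℕ}
    (hK : K.ncard = k) {S : Set V} (hV : 2 * k + S.ncard ≤ Nat.card V) :
    ∃ f : Fin k → G.Subgraph, IsInternallyDisjointSteinerFamily G S f := by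
  obtain ⟨c, hc_inj, hc⟩ := Set.exists_injective_of_le_ncard hK.ge
  obtain ⟨u, hu_inj, hu⟩ := Set.exists_injective_of_le_ncard (s := (K ∪ S)ᶜ) (m := k) (by
    have := Set.ncard_union_le K S
    have := Set.ncard_add_ncard_compl (K ∪ S)
    omega)
  have huK : ∀ i, u i ∉ K := fun i h => hu i (Or.inl h)
  have huS : ∀ i, u i ∉ S := fun i h => hu i (Or.inr h)
  exact ⟨fun i => hG.steinerTree S (hc i) (huK i),
    fun i => hG.isSteinerTree_steinerTree S (hc i) (huK i),
    fun i j hij => hG.steinerTree_internallyDisjoint S _ _ _ _ (hc_inj.ne hij) (hu_inj.ne hij)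
      (huS i) (huS j)⟩

variable [Finite V] {k : ℕ}

lemma le_steinerConn (hG : IsCompleteSplit G K) (hK : K.ncard = k) (hk : 2 ≤ k)
    (hV : 3 * k ≤ Nat.card V) {S : Set V} (hS : S.ncard = k) : k ≤ steinerConn G S := by
  obtain ⟨f, hf⟩ := hG.exists_isInternallyDisjointSteinerFamily hK (S := S) (by omega)
  exact hf.le_steinerConn (Set.one_lt_ncard_iff_nontrivial.1 (by omega))

lemma exists_steinerEdgeConn_le (hG : IsCompleteSplit G K) (hK : K.ncard = k) (hk : 2 ≤ k)
    (hV : 2 * k ≤ Nat.card V) : ∃ S : Set V, S.ncard = k ∧ steinerEdgeConn G S ≤ k := by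
  obtain ⟨S, hSK, hS⟩ := Set.exists_subset_card_eq (s := Kᶜ) (n := k) (by
    have := Set.ncard_add_ncard_compl K
    omega)
  have hSnt : S.Nontrivial := Set.one_lt_ncard_iff_nontrivial.1 (by omega)
  obtain ⟨s, hs⟩ := hSnt.nonempty
  refine ⟨S, hS, ?_⟩
  calc steinerEdgeConn G S ≤ (G.neighborSet s).ncard :=
        steinerEdgeConn_le_ncard_neighborSet hSnt hs
    _ = k := by rw [hG.neighborSet_of_notMem (hSK hs), hK]

lemma genConn_eq (hG : IsCompleteSplit G K) (hK : K.ncard = k) (hk : 2 ≤ k)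
    (hV : 3 * k ≤ Nat.card V) : genConn G k = k := by
  obtain ⟨S₀, hS₀, hle⟩ := hG.exists_steinerEdgeConn_le hK hk (by omega)
  have hS₀nt : S₀.Nontrivial := Set.one_lt_ncard_iff_nontrivial.1 (by omega)
  have hS₀eq : steinerConn G S₀ = k := le_antisymm
    ((steinerConn_le_steinerEdgeConn_s15 hS₀nt).trans hle) (hG.le_steinerConn hK hk hV hS₀)
  exact IsLeast.csInf_eq ⟨⟨S₀, hS₀, hS₀eq⟩,
    fun _ ⟨S, hS, hm⟩ => hm ▸ hG.le_steinerConn hK hk hV hS⟩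

lemma genEdgeConn_eq (hG : IsCompleteSplit G K) (hK : K.ncard = k) (hk : 2 ≤ k)
    (hV : 3 * k ≤ Nat.card V) : genEdgeConn G k = k := by
  obtain ⟨S₀, hS₀, hle⟩ := hG.exists_steinerEdgeConn_le hK hk (by omega)
  have le_steinerEdgeConn : ∀ S : Set V, S.ncard = k → k ≤ steinerEdgeConn G S := fun S hS =>
    (hG.le_steinerConn hK hk hV hS).trans
      (steinerConn_le_steinerEdgeConn_s15 (Set.one_lt_ncard_iff_nontrivial.1 (by omega)))
  exact IsLeast.csInf_eq ⟨⟨S₀, hS₀, le_antisymm hle (le_steinerEdgeConn S₀ hS₀)⟩,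
    fun _ ⟨S, hS, hm⟩ => hm ▸ le_steinerEdgeConn S hS⟩

lemma edgeConn_eq (hG : IsCompleteSplit G K) (hK : K.ncard = k) (hk : 2 ≤ k)
    (hV : 3 * k ≤ Nat.card V) (hKc : Kᶜ.Nonempty) : edgeConn G = k := by
  obtain ⟨v, hv⟩ := hKc
  obtain ⟨w, hw⟩ : K.Nonempty := Set.nonempty_of_ncard_ne_zero (by omega)
  have : Nonempty V := ⟨v⟩
  refine IsLeast.csInf_eq ⟨⟨G.incidenceSet v, G.incidenceSet_subset v, ?_,
    not_connected_deleteEdges_incidenceSet fun h => hv (h ▸ hw)⟩, ?_⟩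
  · rw [ncard_incidenceSet, hG.neighborSet_of_notMem hv, hK]
  rintro _ ⟨M, -, rfl, hM⟩
  refine le_ncard_of_not_connected_deleteEdges (fun x y hxy => ?_) hM
  obtain ⟨S, hxyS, -, hS⟩ := Set.exists_subsuperset_card_eq (Set.subset_univ {x, y})
    ((Set.ncard_pair hxy).trans_le hk) (by rw [Set.ncard_univ]; omega)
  obtain ⟨f, hf⟩ := hG.exists_isInternallyDisjointSteinerFamily hK (S := S) (by omega)
  exact ⟨S, hxyS (Set.mem_insert x _), hxyS (Set.mem_insert_of_mem x rfl), f,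
    hf.isEdgeDisjointSteinerFamily⟩

end IsCompleteSplit

theorem join_graph_connectivities (n k : ℕ) (hk : 2 ≤ k) (hn : 3 * k ≤ n)
    (G : SimpleGraph (Fin n))
    (hG : ∀ u v : Fin n, G.Adj u v ↔ u ≠ v ∧ ((u : ℕ) < k ∨ (v : ℕ) < k)) :
    genConn G k = k ∧ genEdgeConn G k = k ∧ vertConn G = k ∧ edgeConn G = k ∧
      minDeg G = k := by
  have hsplit : IsCompleteSplit G {v : Fin n | (v : ℕ) < k} := hG
  have hK : {v : Fin n | (v : ℕ) < k}.ncard = k := by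
    rw [← Fin.range_castLE (by omega : k ≤ n),
      Set.ncard_range_of_injective (Fin.castLE_injective _), Nat.card_fin]
  have hV : 3 * k ≤ Nat.card (Fin n) := by rwa [Nat.card_fin]
  have hKc : {v : Fin n | (v : ℕ) < k}ᶜ.Nontrivial :=
    ⟨⟨k, by omega⟩, by simp, ⟨k + 1, by omega⟩, by simp, by simp⟩
  exact ⟨hsplit.genConn_eq hK hk hV, hsplit.genEdgeConn_eq hK hk hV,
    hK ▸ hsplit.vertConn_eq hKc, hsplit.edgeConn_eq hK hk hV hKc.nonempty,
    hK ▸ hsplit.minDeg_eq hKc.nonempty⟩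
end
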